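/- arXiv:1603.03843 — 3 statements merged into one kernel-verified Lean document; each statement's English description precedes it below -/
import Mathlib

section
/- Let e ≥ 2, d ≥ 1. Suppose i^{(1)},…,i^{(d)} ∈ I^δ are words each of length e containing every residue exactly once, with all first letters equal to 0 (e.g. each i^{(a)} ∈ I^{δ,j_a} for some j_a), and let i be their concatenation. Let λ ∈ Λ(n,d) and suppose g is a minimal-length double coset representative in S_{λ^{{e}}} \ S_{de} / S_{(e^d)} (where λ^{{e}} = (λ_1^e,…,λ_n^e) ∈ Λ(ne,de)) such that g·i = l(λ,c) for some coloring c ∈ J^n, where l(λ,c) is the concatenation l^{c_1}-word repeated in divided-power order. Then g = h_λ · b for some block permutation b ∈ B_d ≅ S_d (the subgroup of S_{de} permuting the d consecutive blocks of size e), and ℓ(g) = ℓ(h_λ) + ℓ(b), where h_λ is the product over parts of λ of the shortest permutations h_{λ_t} interleaving λ_t blocks of size e into divided-power order. -/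
open Finset

/-- The Coxeter length (number of inversions) of a permutation of `Fin M`. -/
def plen {M : ℕ} (g : Equiv.Perm (Fin M)) : ℕ :=
  (Finset.univ.filter (fun p : Fin M × Fin M => p.1 < p.2 ∧ g p.2 < g p.1)).card

def cumsum (lam : ℕ → ℕ) (t : ℕ) : ℕ := ∑ t' ∈ Finset.range t, lam t'

/-- Index of the block (among `K` consecutive blocks with cumulative sizes
`cum`) containing position `p`. -/
def blockIdxOf (cum : ℕ → ℕ) (K p : ℕ) : ℕ :=
  ((Finset.range K).filter (fun k => cum (k + 1) ≤ p)).card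

/-- `u` (positions `0,…,e-1`) is a word in `I^{δ,j}`. -/
def InIDeltaJ (e j : ℕ) (u : ℕ → ℕ) : Prop :=
  u 0 = 0 ∧ u (e - 1) = j ∧
  ∃ S : Finset ℕ, S ⊆ Finset.Ioo 0 (e - 1) ∧
    S.image u = Finset.Icc 1 (j - 1) ∧
    (Finset.Ioo 0 (e - 1) \ S).image u = Finset.Icc (j + 1) (e - 1) ∧
    (∀ a ∈ S, ∀ b ∈ S, a < b → u a < u b) ∧
    (∀ a ∈ Finset.Ioo 0 (e - 1) \ S, ∀ b ∈ Finset.Ioo 0 (e - 1) \ S,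
      a < b → u b < u a)

/-- Membership in the Young subgroup `𝔖_{(e^d)} ≤ 𝔖_{de}` (d blocks of size e). -/
def MemSed (e d : ℕ) (g : Equiv.Perm (Fin (d * e))) : Prop :=
  ∀ p : Fin (d * e), ((g p : ℕ)) / e = ((p : ℕ)) / e

/-- Membership in the Young subgroup `𝔖_{λ^{{e}}} ≤ 𝔖_{de}`, where
`λ^{{e}} = (λ_1^e, …, λ_n^e)`. -/
def MemSLamE (e n d : ℕ) (lam : ℕ → ℕ) (g : Equiv.Perm (Fin (d * e))) : Prop :=
  ∀ p : Fin (d * e),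
    blockIdxOf (fun k => ∑ k' ∈ Finset.range k, lam (k' / e)) (n * e) ((g p : ℕ)) =
    blockIdxOf (fun k => ∑ k' ∈ Finset.range k, lam (k' / e)) (n * e) ((p : ℕ))

/-- Membership in the block permutation group `B_d ≅ 𝔖_d ≤ 𝔖_{de}`:
offsets within blocks of size `e` are preserved and blocks map rigidly to
blocks. -/
def MemBd (e d : ℕ) (g : Equiv.Perm (Fin (d * e))) : Prop :=
  (∀ p : Fin (d * e), (g p : ℕ) % e = (p : ℕ) % e) ∧
  (∀ p p' : Fin (d * e), (p : ℕ) / e = (p' : ℕ) / e →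
    (g p : ℕ) / e = (g p' : ℕ) / e)

/-!
Minimality of `g` in its double coset means that `g` increases on each block of `e` letters of
the word `i` and on the preimage of each run of equal letters of `l(λ,c)`: otherwise an adjacent
transposition of `𝔖_{(e^d)}` or of `𝔖_{λ^{{e}}}` would shorten it.

Each block starts with `0` and contains every residue once, and so does every part of
`l(λ,c)`, row by row. Counting, for a residue `k`, the occurrences of `k` and of `0` that `g`
sends into the first parts shows that each block goes into a single part. There, monotonicity
on the block puts its `r`-th letter into row `r`, and since the blocks of a part fill every
row in increasing order, the whole block into one column. So `g = h_λ b` with `b` moving blocks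
rigidly, and `b` only inverts blocks sent to different parts, which `g` inverts too; hence
`ℓ(g) = ℓ(h_λ) + ℓ(b)`.
-/

open Equiv

lemma plen_inv {M : ℕ} (g : Perm (Fin M)) : plen g⁻¹ = plen g := by
  unfold plen
  refine card_bij' (fun x _ => (g⁻¹ x.2, g⁻¹ x.1)) (fun x _ => (g x.2, g x.1)) ?_ ?_ ?_ ?_
  all_goals
    intro x hx
    simp only [mem_filter, mem_univ, true_and] at hx ⊢
  · exact ⟨by simpa using hx.2, by simpa using hx.1⟩
  · exact ⟨hx.2, by simpa using hx.1⟩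
  · simp
  · simp

/-- Relabelling by the transposition sends the inversions of `g * swap p q` injectively to
those of `g` other than `(p, q)`. -/
lemma plen_mul_swap_lt {M : ℕ} (g : Perm (Fin M)) {p q : Fin M} (hpq : (q : ℕ) = p + 1)
    (hg : g q < g p) : plen (g * swap p q) < plen g := by
  have hτ : ∀ x y : Fin M, x < y → (x, y) ≠ (p, q) → swap p q x < swap p q y := by
    intro x y hxy hne
    simp only [swap_apply_def]
    simp only [ne_eq, Prod.mk.injEq, Fin.lt_def, Fin.ext_iff] at hxy hne hpq ⊢
    split_ifs <;> simp only [Fin.lt_def] at * <;> omega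
  unfold plen
  set I := univ.filter fun x : Fin M × Fin M => x.1 < x.2 ∧ g x.2 < g x.1
  calc _ ≤ #(I.erase (p, q)) := by
        refine card_le_card_of_injOn (fun x => (swap p q x.1, swap p q x.2)) ?_ ?_
        · intro x hx
          rw [Finset.mem_coe, mem_filter] at hx
          simp only [mem_univ, true_and, Perm.mul_apply] at hx
          have hne : x ≠ (p, q) := by
            rintro rfl
            dsimp only at hx
            rw [swap_apply_left, swap_apply_right] at hx
            exact hx.2.not_gt hg
          simp only [I, Finset.mem_coe, mem_erase, mem_filter, mem_univ, true_and, ne_eq,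
            Prod.mk.injEq]
          refine ⟨fun ⟨h1, h2⟩ => ?_, hτ _ _ hx.1 hne, hx.2⟩
          rw [swap_apply_eq_iff, swap_apply_left] at h1
          rw [swap_apply_eq_iff, swap_apply_right] at h2
          have := hx.1
          rw [h1, h2, Fin.lt_def] at this
          omega
        · intro x _ y _ h
          simp only [Prod.mk.injEq, EmbeddingLike.apply_eq_iff_eq] at h
          exact Prod.ext h.1 h.2
    _ < _ := card_erase_lt_of_mem
        (mem_filter.2 ⟨mem_univ _, show p < q from Fin.lt_def.2 (by omega), hg⟩)

lemma exists_adjacent_descent {M : ℕ} {α : Type*} [LinearOrder α] (f : Fin M → α)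
    {p p' : Fin M} (hpp : p ≤ p') (h : f p' < f p) :
    ∃ x y : Fin M, p ≤ x ∧ y ≤ p' ∧ (y : ℕ) = x + 1 ∧ f y < f x := by
  by_contra! H
  have hmono : ∀ k (hk : (p : ℕ) + k < M), (p : ℕ) + k ≤ p' →
      f p ≤ f ⟨p + k, hk⟩ := by
    intro k
    induction k with
    | zero => intro _ _; rfl
    | succ k ih =>
      intro hk hle
      exact (ih (by omega) (by omega)).trans
        (H _ _ (by simp [Fin.le_def]) (by simpa [Fin.le_def] using hle) (by simp; omega))
  have := hmono (p' - p) (by omega) (by omega)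
  simp only [show (p : ℕ) + (p' - p) = p' by omega] at this
  exact this.not_gt h

/-- The fibres of a monotone `κ` are intervals, so a descent of `g` inside a fibre gives an
adjacent one there, whose transposition would shorten `g`. -/
lemma apply_lt_apply_of_plen_le_mul_swap {M : ℕ} (g : Perm (Fin M)) (κ : Fin M → ℕ)
    (hκ : Monotone κ) (hmin : ∀ x y, κ x = κ y → plen g ≤ plen (g * swap x y))
    {p p' : Fin M} (hκp : κ p = κ p') (hpp : p < p') : g p < g p' := by
  by_contra! hle
  have hlt : g p' < g p := hle.lt_of_ne (g.injective.ne hpp.ne')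
  obtain ⟨x, y, hpx, hyp', hxy, hdesc⟩ := exists_adjacent_descent g hpp.le hlt
  have hκxy : κ x = κ y := le_antisymm (hκ (Fin.le_def.2 (by omega)))
    ((hκ hyp').trans (hκp ▸ hκ hpx))
  exact (plen_mul_swap_lt g hxy hdesc).not_ge (hmin x y hκxy)

lemma apply_lt_apply_of_plen_le_swap_mul {M : ℕ} (g : Perm (Fin M)) (κ : Fin M → ℕ)
    (hκ : Monotone κ) (hmin : ∀ x y, κ x = κ y → plen g ≤ plen (swap x y * g))
    {p p' : Fin M} (hκp : κ (g p) = κ (g p')) (hpp : p < p') : g p < g p' := by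
  have hinv : ∀ x y, κ x = κ y → plen g⁻¹ ≤ plen (g⁻¹ * swap x y) := fun x y h => by
    simpa [← plen_inv (swap x y * g), plen_inv g] using hmin x y h
  by_contra! hle
  have := apply_lt_apply_of_plen_le_mul_swap g⁻¹ κ hκ hinv hκp.symm
    (hle.lt_of_ne (g.injective.ne hpp.ne'))
  simp only [Perm.coe_inv, symm_apply_apply] at this
  exact this.not_gt hpp

/-- The inversions of `h * b` are those of `b`, together with those of `h` pulled back by `b`. -/
lemma plen_mul_eq_add {M : ℕ} (h b : Perm (Fin M))
    (H : ∀ x y, x < y → b y < b x → h (b y) < h (b x)) :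
    plen (h * b) = plen h + plen b := by
  unfold plen
  rw [← card_filter_add_card_filter_not (p := fun x : Fin M × Fin M => b x.2 < b x.1),
    add_comm, filter_filter, filter_filter]
  congr 1
  · refine card_bij' (fun x _ => (b x.1, b x.2)) (fun x _ => (b⁻¹ x.1, b⁻¹ x.2)) ?_ ?_ ?_ ?_
    · intro x hx
      simp only [mem_filter] at hx ⊢
      simp only [mem_univ, true_and, Perm.mul_apply, not_lt] at hx ⊢
      exact ⟨hx.2.lt_of_ne (b.injective.ne hx.1.1.ne), hx.1.2⟩
    · intro x hx
      simp only [mem_filter] at hx ⊢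
      simp only [mem_univ, true_and, Perm.mul_apply, not_lt, Perm.coe_inv, apply_symm_apply]
        at hx ⊢
      refine ⟨⟨?_, hx.2⟩, hx.1.le⟩
      by_contra! hle
      have := H _ _ (hle.lt_of_ne (b⁻¹.injective.ne hx.1.ne')) (by simpa using hx.1)
      simp only [apply_symm_apply] at this
      exact this.not_gt hx.2
    · simp
    · simp
  · congr 1
    ext x
    simp only [mem_filter]
    simp only [mem_univ, true_and, Perm.mul_apply]
    exact ⟨fun hx => ⟨hx.1.1, hx.2⟩, fun hx => ⟨⟨hx.1, H _ _ hx.1 hx.2⟩, hx.2⟩⟩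

lemma blockIdxOf_mono (cum : ℕ → ℕ) (K : ℕ) : Monotone (blockIdxOf cum K) := fun _ _ h =>
  card_le_card fun k hk => by
    rw [mem_filter] at hk ⊢
    exact ⟨hk.1, hk.2.trans h⟩

lemma blockIdxOf_eq {cum : ℕ → ℕ} (hcum : Monotone cum) {K m X : ℕ} (hm : m < K)
    (h₁ : cum m ≤ X) (h₂ : X < cum (m + 1)) : blockIdxOf cum K X = m := by
  unfold blockIdxOf
  convert card_range m
  ext k
  simp only [mem_filter, mem_range]
  constructor
  · rintro ⟨-, hk⟩
    by_contra! hmk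
    exact (h₂.trans_le (hcum (by omega))).not_ge hk
  · exact fun hk => ⟨by omega, (hcum (by omega)).trans h₁⟩

lemma exists_mem_Ico_of_lt (cum : ℕ → ℕ) {K X : ℕ} (h₀ : cum 0 ≤ X) (hK : X < cum K) :
    ∃ m < K, cum m ≤ X ∧ X < cum (m + 1) := by
  induction K with
  | zero => omega
  | succ K ih =>
    by_cases hX : X < cum K
    · obtain ⟨m, hm, h⟩ := ih hX
      exact ⟨m, by omega, h⟩
    · exact ⟨K, by omega, by omega, hK⟩

lemma Finset.eq_card_filter_lt_of_strictMonoOn {α : Type*} [LinearOrder α] {s : Finset α}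
    {f : α → ℕ} (hf : StrictMonoOn f s) (hlt : ∀ a ∈ s, f a < #s) {a : α} (ha : a ∈ s) :
    f a = #(s.filter (· < a)) := by
  have himg : s.image f = range #s := by
    refine eq_of_subset_of_card_le (fun x hx => ?_) ?_
    · obtain ⟨b, hb, rfl⟩ := mem_image.1 hx
      exact mem_range.2 (hlt b hb)
    · rw [card_range, card_image_of_injOn hf.injOn]
  calc f a = #((range #s).filter (· < f a)) := by
        rw [show (range #s).filter (· < f a) = range (f a) by
          ext x; simp only [mem_filter, mem_range]; have := hlt a ha; omega, card_range]
    _ = #((s.filter fun x => f x < f a).image f) := by rw [← himg, filter_image]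
    _ = #(s.filter (· < a)) := by
        rw [card_image_of_injOn (hf.injOn.mono (filter_subset _ _))]
        exact congrArg card (filter_congr fun x hx => hf.lt_iff_lt hx ha)

lemma InIDeltaJ.bijOn {e j : ℕ} {u : ℕ → ℕ} (hu : InIDeltaJ e j u) (hj : 1 ≤ j)
    (hje : j ≤ e - 1) : Set.BijOn u (Set.Iio e) (Set.Iio e) := by
  obtain ⟨h0, hlast, S, hS, hSimg, hSCimg, -, -⟩ := hu
  have hrange : range e = insert 0 (insert (e - 1) (S ∪ (Ioo 0 (e - 1) \ S))) := by
    rw [union_sdiff_of_subset hS]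
    ext x
    simp only [mem_range, mem_insert, mem_Ioo]
    omega
  have himg : (range e).image u = range e := by
    conv_lhs => rw [hrange, image_insert, image_insert, image_union, hSimg, hSCimg, h0, hlast]
    ext x
    simp only [mem_insert, mem_union, mem_Icc, mem_range]
    omega
  rw [← coe_range]
  refine ⟨fun x hx => ?_, card_image_iff.1 (by rw [himg]), fun x hx => ?_⟩
  · rw [← himg]
    exact mem_image_of_mem u hx
  · rw [← himg, mem_coe] at hx
    simpa using hx

lemma cumsum_succ (lam : ℕ → ℕ) (t : ℕ) : cumsum lam (t + 1) = cumsum lam t + lam t :=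
  sum_range_succ _ _

lemma apply_swap_eq_of_eq {α β : Type*} [DecidableEq α] (κ : α → β) {x y : α}
    (h : κ x = κ y) (p : α) : κ (swap x y p) = κ p := by
  rw [swap_apply_def]
  split_ifs <;> simp_all

lemma cumsum_mono (lam : ℕ → ℕ) : Monotone (cumsum lam) := fun _ _ h =>
  sum_le_sum_of_subset (range_subset_range.2 h)

lemma div_mul_add_mod_lt {d e x : ℕ} (hx : x < d * e) (r : ℕ) : x / e * e + r % e < d * e := by
  have he : 0 < e := Nat.pos_of_ne_zero (by rintro rfl; simp at hx)
  calc x / e * e + r % e < (x / e + 1) * e := by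
        rw [add_mul, one_mul]; have := Nat.mod_lt r he; omega
    _ ≤ d * e := Nat.mul_le_mul_right _ (Nat.div_lt_of_lt_mul (by rwa [mul_comm]))

namespace DividedPower

variable (e n : ℕ) (lam : ℕ → ℕ)

/-- `l(λ,c)` is cut into runs `k = t * e + q` (part `t`, row `q`), each made of the `λ_t`
copies of the `q`-th letter of `l^{c_t}`; position `runStart k + a` of run `k` is in column `a`. -/
def runStart (k : ℕ) : ℕ := ∑ k' ∈ range k, lam (k' / e)

def runIdx (P : ℕ) : ℕ := blockIdxOf (runStart e lam) (n * e) P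

def part (P : ℕ) : ℕ := runIdx e n lam P / e

def row (P : ℕ) : ℕ := runIdx e n lam P % e

def col (P : ℕ) : ℕ := P - runStart e lam (runIdx e n lam P)

variable {e n lam}

lemma runStart_mono : Monotone (runStart e lam) := fun _ _ h =>
  sum_le_sum_of_subset (range_subset_range.2 h)

lemma runStart_mul_add (he : 0 < e) (t : ℕ) {q : ℕ} (hq : q ≤ e) :
    runStart e lam (t * e + q) = e * cumsum lam t + q * lam t := by
  have hsplit : ∀ t q, q ≤ e →
      runStart e lam (t * e + q) = runStart e lam (t * e) + q * lam t := by
    intro t q hq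
    rw [runStart, sum_range_add, ← runStart, sum_congr rfl fun j hj => by
      rw [Nat.add_comm, Nat.add_mul_div_right _ _ he,
        Nat.div_eq_of_lt ((mem_range.1 hj).trans_le hq), zero_add], sum_const, card_range,
      smul_eq_mul]
  rw [hsplit t q hq]
  congr 1
  induction t with
  | zero => simp [runStart, cumsum]
  | succ t ih => rw [add_mul, one_mul, hsplit t e le_rfl, ih, cumsum_succ]; ring

lemma runIdx_mono : Monotone (runIdx e n lam) := blockIdxOf_mono _ _

lemma part_mono : Monotone (part e n lam) := fun _ _ h => Nat.div_le_div_right (runIdx_mono h)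

lemma row_le_row {P Q : ℕ} (hPQ : P ≤ Q) (h : part e n lam P = part e n lam Q) :
    row e n lam P ≤ row e n lam Q := by
  have := runIdx_mono (e := e) (n := n) (lam := lam) hPQ
  unfold part row at *
  rw [← Nat.div_add_mod (runIdx e n lam P) e, ← Nat.div_add_mod (runIdx e n lam Q) e, h] at this
  omega

lemma runIdx_mul_cumsum_add (he : 0 < e) {t q a : ℕ} (ht : t < n) (hq : q < e) (ha : a < lam t) :
    runIdx e n lam (e * cumsum lam t + q * lam t + a) = t * e + q := by
  refine blockIdxOf_eq runStart_mono ?_ ?_ ?_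
  · calc t * e + q < (t + 1) * e := by rw [add_mul, one_mul]; omega
      _ ≤ n * e := Nat.mul_le_mul_right _ ht
  · rw [runStart_mul_add he t hq.le]
    omega
  · rw [show t * e + q + 1 = t * e + (q + 1) by ring, runStart_mul_add he t hq, Nat.succ_mul]
    omega

lemma part_mul_cumsum_add (he : 0 < e) {t q a : ℕ} (ht : t < n) (hq : q < e) (ha : a < lam t) :
    part e n lam (e * cumsum lam t + q * lam t + a) = t := by
  rw [part, runIdx_mul_cumsum_add he ht hq ha, Nat.add_comm, Nat.add_mul_div_right _ _ he,
    Nat.div_eq_of_lt hq, zero_add]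

lemma row_mul_cumsum_add (he : 0 < e) {t q a : ℕ} (ht : t < n) (hq : q < e) (ha : a < lam t) :
    row e n lam (e * cumsum lam t + q * lam t + a) = q := by
  rw [row, runIdx_mul_cumsum_add he ht hq ha, Nat.add_comm, Nat.add_mul_mod_self_right,
    Nat.mod_eq_of_lt hq]

lemma col_mul_cumsum_add (he : 0 < e) {t q a : ℕ} (ht : t < n) (hq : q < e) (ha : a < lam t) :
    col e n lam (e * cumsum lam t + q * lam t + a) = a := by
  rw [col, runIdx_mul_cumsum_add he ht hq ha, runStart_mul_add he t hq.le]
  omega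

lemma decompose_of_lt (he : 0 < e) {P : ℕ} (hP : P < e * cumsum lam n) :
    part e n lam P < n ∧ row e n lam P < e ∧ col e n lam P < lam (part e n lam P) ∧
      P = e * cumsum lam (part e n lam P) + row e n lam P * lam (part e n lam P) +
        col e n lam P := by
  obtain ⟨k, hk, h₁, h₂⟩ := exists_mem_Ico_of_lt (runStart e lam) (K := n * e) (X := P)
    (by simp [runStart])
    (by rwa [← add_zero (n * e), runStart_mul_add he n (Nat.zero_le e), zero_mul, add_zero])
  have hkI : runIdx e n lam P = k := blockIdxOf_eq runStart_mono hk h₁ h₂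
  have hq := Nat.mod_lt k he
  have hstart : runStart e lam k = e * cumsum lam (k / e) + k % e * lam (k / e) := by
    rw [← runStart_mul_add he _ hq.le, Nat.div_add_mod']
  have hnext : runStart e lam (k + 1) = e * cumsum lam (k / e) + (k % e + 1) * lam (k / e) := by
    rw [← runStart_mul_add he _ hq, Nat.succ_eq_add_one, ← add_assoc, Nat.div_add_mod']
  simp only [part, row, col, hkI, hstart]
  rw [hstart] at h₁
  rw [hnext, add_mul, one_mul] at h₂
  exact ⟨Nat.div_lt_of_lt_mul (by rwa [mul_comm]), hq, by omega, by omega⟩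

lemma mul_cumsum_add_lt {t x : ℕ} (ht : t < n) (hx : x < e * lam t) :
    e * cumsum lam t + x < e * cumsum lam n :=
  calc _ < e * cumsum lam (t + 1) := by rw [cumsum_succ, mul_add]; omega
    _ ≤ _ := Nat.mul_le_mul_left _ (cumsum_mono lam ht)

lemma runIdx_eq_part_mul_add_row (P : ℕ) :
    runIdx e n lam P = part e n lam P * e + row e n lam P :=
  (Nat.div_add_mod' _ _).symm

/-- Moving each occurrence of `i` to the row of `j`, in the same part and column, is
injective. -/
lemma card_filter_letter_le {d : ℕ} {L : ℕ → ℕ → ℕ} (he : 0 < e)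
    (hN : e * cumsum lam n = d * e) (hL : ∀ t < n, Set.BijOn (L t) (Set.Iio e) (Set.Iio e))
    (i : ℕ) {j : ℕ} (hj : j < e) (T : ℕ) :
    #(univ.filter fun P : Fin (d * e) =>
        L (part e n lam P) (row e n lam P) = i ∧ part e n lam P ≤ T) ≤
      #(univ.filter fun P : Fin (d * e) =>
        L (part e n lam P) (row e n lam P) = j ∧ part e n lam P ≤ T) := by
  have hdec := fun P : Fin (d * e) =>
    decompose_of_lt (n := n) (lam := lam) he (P.2.trans_eq hN.symm)
  set q : ℕ → ℕ := fun t => Function.invFunOn (L t) (Set.Iio e) j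
  have hq : ∀ t < n, q t < e ∧ L t (q t) = j := fun t ht =>
    ⟨Function.invFunOn_mem ((hL t ht).surjOn hj), Function.invFunOn_eq ((hL t ht).surjOn hj)⟩
  have hlt : ∀ P : Fin (d * e), e * cumsum lam (part e n lam P) +
      q (part e n lam P) * lam (part e n lam P) + col e n lam P < d * e := fun P => by
    obtain ⟨ht, -, ha, -⟩ := hdec P
    have := mul_cumsum_add_lt ht <| calc
      q (part e n lam P) * lam (part e n lam P) + col e n lam P
        < (q (part e n lam P) + 1) * lam (part e n lam P) := by rw [add_mul]; omega
      _ ≤ e * lam (part e n lam P) := Nat.mul_le_mul_right _ (hq _ ht).1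
    rwa [← add_assoc, hN] at this
  refine card_le_card_of_injOn (fun P => ⟨_, hlt P⟩) (fun P hP => ?_)
    (fun P hP P' hP' hPP' => ?_)
  · obtain ⟨ht, -, ha, -⟩ := hdec P
    rw [Finset.mem_coe, mem_filter] at hP ⊢
    simp only [part_mul_cumsum_add he ht (hq _ ht).1 ha,
      row_mul_cumsum_add he ht (hq _ ht).1 ha]
    exact ⟨mem_univ _, (hq _ ht).2, hP.2.2⟩
  · obtain ⟨ht, hr, ha, hPeq⟩ := hdec P
    obtain ⟨ht', hr', ha', hPeq'⟩ := hdec P'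
    rw [Finset.mem_coe, mem_filter] at *
    have hv := congrArg Fin.val hPP'
    dsimp only at hv
    have hpart := part_mul_cumsum_add (n := n) he ht (hq _ ht).1 ha
    have hcol := col_mul_cumsum_add (n := n) he ht (hq _ ht).1 ha
    rw [hv, part_mul_cumsum_add he ht' (hq _ ht').1 ha'] at hpart
    rw [hv, col_mul_cumsum_add he ht' (hq _ ht').1 ha'] at hcol
    have hrow : row e n lam P = row e n lam P' :=
      (hL _ ht).injOn hr hr' (by rw [hP.2.1, ← hpart, hP'.2.1])
    exact Fin.ext (by rw [hPeq, hPeq', hpart, hrow, hcol])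

section Blocks

variable {d : ℕ}

lemma val_div_lt (p : Fin (d * e)) : (p : ℕ) / e < d :=
  Nat.div_lt_of_lt_mul (p.2.trans_eq (mul_comm _ _))

def blockPos (x : Fin (d * e)) (r : ℕ) : Fin (d * e) :=
  ⟨x / e * e + r % e, div_mul_add_mod_lt x.2 r⟩

lemma val_blockPos (x : Fin (d * e)) (r : ℕ) : (blockPos x r : ℕ) = x / e * e + r % e := rfl

lemma blockPos_div (he : 0 < e) (x : Fin (d * e)) (r : ℕ) : (blockPos x r : ℕ) / e = x / e := by
  rw [val_blockPos, Nat.add_comm, Nat.add_mul_div_right _ _ he,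
    Nat.div_eq_of_lt (Nat.mod_lt _ he), zero_add]

lemma blockPos_mod (x : Fin (d * e)) (r : ℕ) : (blockPos x r : ℕ) % e = r % e := by
  rw [val_blockPos, Nat.add_comm, Nat.add_mul_mod_self_right, Nat.mod_mod]

lemma blockPos_mod_self (x : Fin (d * e)) : blockPos x (x % e) = x :=
  Fin.ext (by rw [val_blockPos, Nat.mod_mod, Nat.div_add_mod'])

lemma blockPos_blockPos (he : 0 < e) (x : Fin (d * e)) (r r' : ℕ) :
    blockPos (blockPos x r) r' = blockPos x r' :=
  Fin.ext (by rw [val_blockPos, blockPos_div he, val_blockPos])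

lemma blockPos_eq_of_div_eq {x y : Fin (d * e)} (h : (x : ℕ) / e = y / e) (r : ℕ) :
    blockPos x r = blockPos y r :=
  Fin.ext (by simp only [blockPos, h])

lemma div_eq_of_blockPos_eq (he : 0 < e) {x y : Fin (d * e)} {r r' : ℕ}
    (h : blockPos x r = blockPos y r') : (x : ℕ) / e = y / e := by
  rw [← blockPos_div he x r, ← blockPos_div he y r', h]

lemma blockPos_zero_le (x : Fin (d * e)) : blockPos x 0 ≤ x :=
  Fin.le_def.2 (by simpa [blockPos] using Nat.div_mul_le_self x e)

lemma blockPos_lt_blockPos {r r' : ℕ} (hrr : r < r') (hr' : r' < e) (x : Fin (d * e)) :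
    blockPos x r < blockPos x r' :=
  Fin.lt_def.2 (by
    simp only [blockPos, Nat.mod_eq_of_lt hr', Nat.mod_eq_of_lt (hrr.trans hr')]
    omega)

lemma blockPos_lt_of_div_lt (he : 0 < e) {x y : Fin (d * e)} (h : (x : ℕ) / e < y / e)
    (r r' : ℕ) : blockPos x r < blockPos y r' := by
  refine Fin.lt_def.2 ?_
  calc (x : ℕ) / e * e + r % e < (x / e + 1) * e := by
        rw [add_mul, one_mul]; have := Nat.mod_lt r he; omega
    _ ≤ y / e * e := Nat.mul_le_mul_right _ h
    _ ≤ _ := Nat.le_add_right _ _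

end Blocks

/-- The standing situation once minimality has been used: `g` spells the concatenation of the
words `v a` (`a < d`) as the word of `l(λ,c)` whose `t`-th part is the word `L t = l^{c_t}`
in divided powers, and `g` is increasing on every block of the source and on the preimage of
every run of the target. -/
structure MinimalShuffle (e n d : ℕ) (lam : ℕ → ℕ) (L v : ℕ → ℕ → ℕ)
    (g : Perm (Fin (d * e))) : Prop where
  pos : 0 < e
  card_eq : e * cumsum lam n = d * e
  L_bijOn : ∀ t < n, Set.BijOn (L t) (Set.Iio e) (Set.Iio e)
  v_zero : ∀ a < d, v a 0 = 0
  v_existsUnique : ∀ a < d, ∀ i < e, ∃! q, q < e ∧ v a q = i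
  letter : ∀ p : Fin (d * e), L (part e n lam (g p)) (row e n lam (g p)) = v (p / e) (p % e)
  lt_of_div_eq : ∀ p p' : Fin (d * e), (p : ℕ) / e = p' / e → p < p' → g p < g p'
  lt_of_runIdx_eq : ∀ p p' : Fin (d * e),
    runIdx e n lam (g p) = runIdx e n lam (g p') → p < p' → g p < g p'

def startsInPart {d : ℕ} (e n : ℕ) (lam : ℕ → ℕ) (g : Perm (Fin (d * e))) (T : ℕ) :
    Finset (Fin (d * e)) :=
  univ.filter fun x => (x : ℕ) % e = 0 ∧ part e n lam (g x) = T

/-- In the transposed layout `h_λ⁻¹ l(λ,c)`, the block holding the image of `p`. -/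
def targetBlock {d : ℕ} (e n : ℕ) (lam : ℕ → ℕ) (g : Perm (Fin (d * e)))
    (p : Fin (d * e)) : ℕ :=
  cumsum lam (part e n lam (g p)) + col e n lam (g p)

namespace MinimalShuffle

variable {d : ℕ} {L v : ℕ → ℕ → ℕ} {g : Perm (Fin (d * e))}

lemma decompose (hS : MinimalShuffle e n d lam L v g) (p : Fin (d * e)) :
    part e n lam (g p) < n ∧ row e n lam (g p) < e ∧
      col e n lam (g p) < lam (part e n lam (g p)) ∧
      (g p : ℕ) = e * cumsum lam (part e n lam (g p)) +
        row e n lam (g p) * lam (part e n lam (g p)) + col e n lam (g p) :=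
  decompose_of_lt hS.pos ((g p).2.trans_eq hS.card_eq.symm)

lemma letter_lt (hS : MinimalShuffle e n d lam L v g) (p : Fin (d * e)) :
    v (p / e) (p % e) < e :=
  hS.letter p ▸ (hS.L_bijOn _ (hS.decompose p).1).mapsTo (hS.decompose p).2.1

lemma eq_of_div_eq_of_letter_eq (hS : MinimalShuffle e n d lam L v g) {p p' : Fin (d * e)}
    (hdiv : (p : ℕ) / e = p' / e) (hlet : v (p / e) (p % e) = v (p' / e) (p' % e)) : p = p' := by
  have hmod : (p : ℕ) % e = p' % e :=
    (hS.v_existsUnique _ (val_div_lt p) _ (hS.letter_lt p)).unique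
      ⟨Nat.mod_lt _ hS.pos, rfl⟩ ⟨Nat.mod_lt _ hS.pos, by rw [hlet, hdiv]⟩
  exact Fin.ext (by rw [← Nat.div_add_mod' p e, ← Nat.div_add_mod' p' e, hdiv, hmod])

lemma letter_blockPos_zero (hS : MinimalShuffle e n d lam L v g) (x : Fin (d * e)) :
    v ((blockPos x 0 : ℕ) / e) ((blockPos x 0 : ℕ) % e) = 0 := by
  rw [blockPos_div hS.pos, blockPos_mod, Nat.zero_mod, hS.v_zero _ (val_div_lt x)]

lemma apply_blockPos_zero_le (hS : MinimalShuffle e n d lam L v g) (x : Fin (d * e)) :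
    g (blockPos x 0) ≤ g x := by
  rcases (blockPos_zero_le x).lt_or_eq with h | h
  · exact (hS.lt_of_div_eq _ _ (blockPos_div hS.pos x 0) h).le
  · rw [h]

/-- Let `i` be the letter at `p`. Sending each occurrence of `i` to the start of its block
is injective, and maps the occurrences that `g` sends into the first `T + 1` parts to block
starts sent there; counting in `l(λ,c)` shows that it reaches all of them. -/
lemma part_apply_eq_blockPos_zero (hS : MinimalShuffle e n d lam L v g) (p : Fin (d * e)) :
    part e n lam (g p) = part e n lam (g (blockPos p 0)) := by
  have he := hS.pos
  set T := part e n lam (g (blockPos p 0))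
  set A : ℕ → Finset (Fin (d * e)) := fun i =>
    univ.filter fun x => v (x / e) (x % e) = i ∧ part e n lam (g x) ≤ T with hA
  set i := v (p / e) (p % e)
  have hstart : ∀ x, part e n lam (g (blockPos x 0)) ≤ part e n lam (g x) := fun x =>
    part_mono (Fin.le_def.1 (hS.apply_blockPos_zero_le x))
  have hmaps : Set.MapsTo (blockPos · 0) (A i : Set (Fin (d * e))) (A 0) := fun x hx => by
    simp only [hA, coe_filter, mem_univ, true_and, Set.mem_ofPred_eq] at hx ⊢
    exact ⟨hS.letter_blockPos_zero x, (hstart x).trans hx.2⟩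
  have hinj : Set.InjOn (blockPos · 0) (A i : Set (Fin (d * e))) := fun x hx y hy hxy => by
    simp only [hA, coe_filter, mem_univ, true_and, Set.mem_ofPred_eq] at hx hy
    exact hS.eq_of_div_eq_of_letter_eq (div_eq_of_blockPos_eq he hxy) (hx.1.trans hy.1.symm)
  have hcard : #(A 0) ≤ #(A i) := by
    have hcount : ∀ j, #(A j) = #(univ.filter fun P : Fin (d * e) =>
        L (part e n lam P) (row e n lam P) = j ∧ part e n lam P ≤ T) := fun j =>
      card_equiv g fun x => by simp only [hA, mem_filter, mem_univ, true_and, hS.letter]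
    rw [hcount, hcount]
    exact card_filter_letter_le he hS.card_eq hS.L_bijOn 0 (hS.letter_lt p) T
  have hp₀ : blockPos p 0 ∈ A 0 := by
    simp only [hA, mem_filter, mem_univ, true_and]
    exact ⟨hS.letter_blockPos_zero p, le_rfl⟩
  obtain ⟨x, hx, hxp⟩ := surjOn_of_injOn_of_card_le _ hmaps hinj hcard hp₀
  rw [mem_coe, mem_filter] at hx
  obtain rfl : x = p := hS.eq_of_div_eq_of_letter_eq (div_eq_of_blockPos_eq he hxp) hx.2.1
  exact le_antisymm hx.2.2 (hstart x)

lemma part_apply_eq_of_div_eq (hS : MinimalShuffle e n d lam L v g) {p p' : Fin (d * e)}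
    (h : (p : ℕ) / e = p' / e) : part e n lam (g p) = part e n lam (g p') := by
  rw [hS.part_apply_eq_blockPos_zero p, hS.part_apply_eq_blockPos_zero p',
    blockPos_eq_of_div_eq h]

/-- The rows of a block's letters increase strictly: `g` increases on the block, and
distinct letters of one part lie in distinct rows. -/
lemma row_apply (hS : MinimalShuffle e n d lam L v g) (p : Fin (d * e)) :
    row e n lam (g p) = p % e := by
  have he := hS.pos
  have hmono : StrictMonoOn (fun r => row e n lam (g (blockPos p r))) (range e) := by
    intro r hr r' hr' hrr
    have hdiv := (blockPos_div he p r).trans (blockPos_div he p r').symm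
    have hlt := hS.lt_of_div_eq _ _ hdiv (blockPos_lt_blockPos hrr (mem_range.1 hr') p)
    have hpart := hS.part_apply_eq_of_div_eq hdiv
    refine (row_le_row (Fin.le_def.1 hlt.le) hpart).lt_of_ne fun hrow => hlt.ne ?_
    rw [hS.eq_of_div_eq_of_letter_eq hdiv (by rw [← hS.letter, ← hS.letter, hpart, hrow])]
  have hrank := Finset.eq_card_filter_lt_of_strictMonoOn hmono
    (fun r _ => by rw [card_range]; exact (hS.decompose _).2.1) (mem_range.2 (Nat.mod_lt p he))
  rwa [blockPos_mod_self, show (range e).filter (· < (p : ℕ) % e) = range (p % e) by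
    ext; simp only [mem_filter, mem_range]; have := Nat.mod_lt p he; omega, card_range] at hrank

lemma lam_le_card_startsInPart (hS : MinimalShuffle e n d lam L v g) {T : ℕ} (hT : T < n) :
    lam T ≤ #(startsInPart e n lam g T) := by
  have he := hS.pos
  have hlt : ∀ a : Fin (lam T), e * cumsum lam T + 0 * lam T + a < d * e := fun a => by
    rw [zero_mul, add_zero, ← hS.card_eq]
    exact mul_cumsum_add_lt hT (a.2.trans_le (Nat.le_mul_of_pos_left _ he))
  calc lam T = #(univ : Finset (Fin (lam T))) := (card_fin _).symm
    _ ≤ _ := by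
      refine card_le_card_of_injOn (fun a => g⁻¹ ⟨_, hlt a⟩) (fun a _ => ?_)
        fun a _ a' _ h => ?_
      · have hrow := hS.row_apply (g⁻¹ ⟨_, hlt a⟩)
        simp only [Perm.coe_inv, apply_symm_apply, row_mul_cumsum_add he hT he a.2] at hrow
        simp only [startsInPart, coe_filter, mem_univ, true_and, Set.mem_ofPred_eq,
          Perm.coe_inv, apply_symm_apply, part_mul_cumsum_add he hT he a.2]
        exact ⟨hrow.symm, trivial⟩
      · exact Fin.ext (by simpa using h)

lemma strictMonoOn_col (hS : MinimalShuffle e n d lam L v g) (T r : ℕ) :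
    StrictMonoOn (fun x => col e n lam (g (blockPos x r))) (startsInPart e n lam g T) := by
  have he := hS.pos
  intro x hx x' hx' hxx'
  dsimp only
  simp only [startsInPart, coe_filter, mem_univ, true_and, Set.mem_ofPred_eq] at hx hx'
  have hdiv : (x : ℕ) / e < x' / e := by
    by_contra! h
    have := Nat.mul_le_mul_right e h
    rw [Nat.div_mul_cancel (Nat.dvd_of_mod_eq_zero hx.1),
      Nat.div_mul_cancel (Nat.dvd_of_mod_eq_zero hx'.1)] at this
    exact (Fin.lt_def.1 hxx').not_ge this
  have hpart : part e n lam (g (blockPos x r)) = part e n lam (g (blockPos x' r)) := by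
    rw [hS.part_apply_eq_of_div_eq (blockPos_div he x r), hx.2,
      hS.part_apply_eq_of_div_eq (blockPos_div he x' r), hx'.2]
  have hrow : row e n lam (g (blockPos x r)) = row e n lam (g (blockPos x' r)) := by
    rw [hS.row_apply, hS.row_apply, blockPos_mod, blockPos_mod]
  have hlt := hS.lt_of_runIdx_eq _ _
    (by rw [runIdx_eq_part_mul_add_row, runIdx_eq_part_mul_add_row, hpart, hrow])
    (blockPos_lt_of_div_lt he hdiv r r)
  have h₁ := (hS.decompose (blockPos x r)).2.2.2
  have h₂ := (hS.decompose (blockPos x' r)).2.2.2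
  rw [hpart, hrow] at h₁
  simp only [Fin.lt_def] at hlt
  omega

/-- For each offset `r`, the column of the `r`-th letter of a block is the rank of the block
among the blocks sent to the same part. -/
lemma col_apply_eq_blockPos_zero (hS : MinimalShuffle e n d lam L v g) (p : Fin (d * e)) :
    col e n lam (g p) = col e n lam (g (blockPos p 0)) := by
  have he := hS.pos
  set x := blockPos p 0
  set S := startsInPart e n lam g (part e n lam (g p))
  have hx : x ∈ S := by
    simp only [S, startsInPart, mem_filter, mem_univ, true_and]
    exact ⟨by rw [blockPos_mod, Nat.zero_mod], (hS.part_apply_eq_blockPos_zero p).symm⟩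
  have hrank : ∀ r, col e n lam (g (blockPos x r)) = #(S.filter (· < x)) := fun r =>
    Finset.eq_card_filter_lt_of_strictMonoOn (hS.strictMonoOn_col _ r) (fun y hy => by
      simp only [startsInPart, mem_filter, mem_univ, true_and] at hy
      have hcol := (hS.decompose (blockPos y r)).2.2.1
      rw [hS.part_apply_eq_of_div_eq (blockPos_div he y r), hy.2] at hcol
      exact hcol.trans_le (hS.lam_le_card_startsInPart (hS.decompose p).1)) hx
  calc col e n lam (g p) = col e n lam (g (blockPos x (p % e))) := by
        rw [blockPos_blockPos he, blockPos_mod_self]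
    _ = col e n lam (g (blockPos x 0)) := (hrank _).trans (hrank 0).symm
    _ = col e n lam (g x) := by rw [blockPos_blockPos he]

lemma col_lt_col_of_div_lt (hS : MinimalShuffle e n d lam L v g) {p p' : Fin (d * e)}
    (hdiv : (p : ℕ) / e < p' / e) (hpart : part e n lam (g p) = part e n lam (g p')) :
    col e n lam (g p) < col e n lam (g p') := by
  have he := hS.pos
  have hmem : ∀ y : Fin (d * e), blockPos y 0 ∈ startsInPart e n lam g (part e n lam (g y)) :=
    fun y => by
      simp only [startsInPart, mem_filter, mem_univ, true_and]
      exact ⟨by rw [blockPos_mod, Nat.zero_mod], (hS.part_apply_eq_blockPos_zero y).symm⟩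
  have := hS.strictMonoOn_col _ 0 (hmem p) (hpart ▸ hmem p') (blockPos_lt_of_div_lt he hdiv 0 0)
  simpa only [blockPos_blockPos he, ← hS.col_apply_eq_blockPos_zero] using this

lemma targetBlock_eq_of_div_eq (hS : MinimalShuffle e n d lam L v g) {p p' : Fin (d * e)}
    (hdiv : (p : ℕ) / e = p' / e) : targetBlock e n lam g p = targetBlock e n lam g p' := by
  rw [targetBlock, targetBlock, hS.part_apply_eq_of_div_eq hdiv, hS.col_apply_eq_blockPos_zero p,
    hS.col_apply_eq_blockPos_zero p', blockPos_eq_of_div_eq hdiv]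

lemma targetBlock_lt_of_div_lt (hS : MinimalShuffle e n d lam L v g) {p p' : Fin (d * e)}
    (hdiv : (p : ℕ) / e < p' / e) (hle : part e n lam (g p) ≤ part e n lam (g p')) :
    targetBlock e n lam g p < targetBlock e n lam g p' := by
  rcases hle.lt_or_eq with hlt | heq
  · calc targetBlock e n lam g p < cumsum lam (part e n lam (g p) + 1) := by
          rw [targetBlock, cumsum_succ]; exact Nat.add_lt_add_left (hS.decompose p).2.2.1 _
      _ ≤ cumsum lam (part e n lam (g p')) := cumsum_mono lam hlt
      _ ≤ targetBlock e n lam g p' := Nat.le_add_right _ _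
  · rw [targetBlock, targetBlock, heq]
    exact Nat.add_lt_add_left (hS.col_lt_col_of_div_lt hdiv heq) _

/-- The two positions lie in different blocks, whose targets can only be inverted when they are
sent to different parts; then `g` inverts them too. -/
lemma apply_lt_apply_of_targetBlock_lt (hS : MinimalShuffle e n d lam L v g) {x y : Fin (d * e)}
    (hxy : x < y)
    (h : targetBlock e n lam g y * e + y % e < targetBlock e n lam g x * e + x % e) :
    g y < g x := by
  have he := hS.pos
  have hle : targetBlock e n lam g y ≤ targetBlock e n lam g x := by
    by_contra! hlt
    have := Nat.mul_le_mul_right e (Nat.succ_le_of_lt hlt)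
    rw [Nat.succ_mul] at this
    have := Nat.mod_lt x he
    omega
  have hdiv : (x : ℕ) / e < y / e := by
    refine (Nat.div_le_div_right (Fin.le_def.1 hxy.le)).lt_of_ne fun hdiv => ?_
    rw [hS.targetBlock_eq_of_div_eq hdiv] at h
    have hx := Nat.div_add_mod' x e
    have hy := Nat.div_add_mod' y e
    rw [hdiv] at hx
    have := Fin.lt_def.1 hxy
    omega
  by_contra! hge
  exact (hS.targetBlock_lt_of_div_lt hdiv (part_mono (Fin.le_def.1 hge))).not_ge hle

lemma val_inv_apply (hS : MinimalShuffle e n d lam L v g) {h : Perm (Fin (d * e))}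
    (hh : ∀ t, t < n → ∀ a, a < lam t → ∀ q, q < e →
      ∀ (hlt : e * cumsum lam t + a * e + q < d * e),
        ((h ⟨e * cumsum lam t + a * e + q, hlt⟩ : Fin (d * e)) : ℕ) =
          e * cumsum lam t + q * lam t + a) (p : Fin (d * e)) :
    (h⁻¹ (g p) : ℕ) = targetBlock e n lam g p * e + p % e := by
  have he := hS.pos
  obtain ⟨ht, -, ha, hgp⟩ := hS.decompose p
  have hlt : e * cumsum lam (part e n lam (g p)) + col e n lam (g p) * e + p % e < d * e := by
    have := mul_cumsum_add_lt ht <| calc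
      col e n lam (g p) * e + p % e < (col e n lam (g p) + 1) * e := by
        rw [add_mul, one_mul]; exact Nat.add_lt_add_left (Nat.mod_lt _ he) _
      _ ≤ e * lam (part e n lam (g p)) := by rw [mul_comm e]; exact Nat.mul_le_mul_right _ ha
    rwa [← add_assoc, hS.card_eq] at this
  rw [hS.row_apply] at hgp
  have hhp : h ⟨_, hlt⟩ = g p := Fin.ext ((hh _ ht _ ha _ (Nat.mod_lt _ he) hlt).trans hgp.symm)
  rw [← hhp, Perm.coe_inv, symm_apply_apply, targetBlock]
  ring

lemma exists_memBd_mul (hS : MinimalShuffle e n d lam L v g) (h : Perm (Fin (d * e)))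
    (hh : ∀ t, t < n → ∀ a, a < lam t → ∀ q, q < e →
      ∀ (hlt : e * cumsum lam t + a * e + q < d * e),
        ((h ⟨e * cumsum lam t + a * e + q, hlt⟩ : Fin (d * e)) : ℕ) =
          e * cumsum lam t + q * lam t + a) :
    ∃ b : Perm (Fin (d * e)), MemBd e d b ∧ g = h * b ∧ plen g = plen h + plen b := by
  have he := hS.pos
  have hb := hS.val_inv_apply hh
  refine ⟨h⁻¹ * g, ⟨fun p => ?_, fun p p' hdiv => ?_⟩, by simp, ?_⟩
  · rw [Perm.mul_apply, hb, Nat.add_comm, Nat.add_mul_mod_self_right, Nat.mod_mod]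
  · rw [Perm.mul_apply, Perm.mul_apply, hb, hb, hS.targetBlock_eq_of_div_eq hdiv,
      Nat.add_comm, Nat.add_comm _ (p' % e), Nat.add_mul_div_right _ _ he,
      Nat.add_mul_div_right _ _ he, Nat.div_eq_of_lt (Nat.mod_lt _ he),
      Nat.div_eq_of_lt (Nat.mod_lt _ he)]
  · convert plen_mul_eq_add h (h⁻¹ * g) (fun x y hxy hyx => ?_) using 2
    · simp
    simp only [Perm.mul_apply, Perm.coe_inv, apply_symm_apply]
    have hyx' := Fin.lt_def.1 hyx
    simp only [Perm.mul_apply, hb] at hyx'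
    exact hS.apply_lt_apply_of_targetBlock_lt hxy hyx'

end MinimalShuffle

end DividedPower

open DividedPower in
theorem double_coset_block_factorization_general
    (e n d : ℕ) (he : 2 ≤ e)
    (lam : ℕ → ℕ) (hlam : ∑ t ∈ Finset.range n, lam t = d)
    (c : ℕ → ℕ) (hc : ∀ t, t < n → 1 ≤ c t ∧ c t ≤ e - 1)
    (Lw : ℕ → ℕ → ℕ) (hLw : ∀ jj, 1 ≤ jj → jj ≤ e - 1 → InIDeltaJ e jj (Lw jj))
    (v : ℕ → ℕ → ℕ)
    (hv0 : ∀ a, a < d → v a 0 = 0)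
    (hvbij : ∀ a, a < d → ∀ i, i < e → ∃! q, q < e ∧ v a q = i)
    (w : ℕ → ℕ) (hw : ∀ p, w p = v (p / e) (p % e))
    (W : ℕ → ℕ)
    (hW : ∀ t, t < n → ∀ q, q < e → ∀ a, a < lam t →
      W (e * cumsum lam t + q * lam t + a) = Lw (c t) q)
    (hlamPerm : Equiv.Perm (Fin (d * e)))
    (hhl : ∀ t, t < n → ∀ a, a < lam t → ∀ q, q < e →
      ∀ (hlt : e * cumsum lam t + a * e + q < d * e),
        ((hlamPerm ⟨e * cumsum lam t + a * e + q, hlt⟩ : Fin (d * e)) : ℕ) =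
          e * cumsum lam t + q * lam t + a)
    (g : Equiv.Perm (Fin (d * e)))
    (hg : ∀ p : Fin (d * e), W ((g p : ℕ)) = w ((p : ℕ)))
    (hmin : ∀ h : Equiv.Perm (Fin (d * e)),
      (∃ u u', MemSLamE e n d lam u ∧ MemSed e d u' ∧ h = u * g * u') →
      plen g ≤ plen h) :
    ∃ b : Equiv.Perm (Fin (d * e)), MemBd e d b ∧ g = hlamPerm * b ∧
      plen g = plen hlamPerm + plen b := by
  have he₀ : 0 < e := by omega
  have hcard : e * cumsum lam n = d * e := by rw [cumsum, hlam, mul_comm]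
  have hletter : ∀ p : Fin (d * e),
      Lw (c (part e n lam (g p))) (row e n lam (g p)) = v (p / e) (p % e) := fun p => by
    obtain ⟨ht, hq, ha, hgp⟩ := decompose_of_lt he₀ ((g p).2.trans_eq hcard.symm)
    have := hW _ ht _ hq _ ha
    rw [← hgp, hg, hw] at this
    exact this.symm
  have hblock : ∀ p p' : Fin (d * e), (p : ℕ) / e = p' / e → p < p' → g p < g p' :=
    fun _ _ => apply_lt_apply_of_plen_le_mul_swap g (fun x => (x : ℕ) / e)
      (fun _ _ h => Nat.div_le_div_right h) fun x y hxy => hmin _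
        ⟨1, swap x y, fun _ => rfl,
          apply_swap_eq_of_eq (fun x : Fin (d * e) => (x : ℕ) / e) hxy, by simp⟩
  have hrun : ∀ p p' : Fin (d * e),
      runIdx e n lam (g p) = runIdx e n lam (g p') → p < p' → g p < g p' :=
    fun _ _ => apply_lt_apply_of_plen_le_swap_mul g (fun x => runIdx e n lam x)
      (fun _ _ h => runIdx_mono h) fun x y hxy => hmin _
        ⟨swap x y, 1, apply_swap_eq_of_eq (fun x : Fin (d * e) => runIdx e n lam x) hxy,
          fun _ => rfl, by simp⟩
  have hL : ∀ t < n, Set.BijOn (Lw (c t)) (Set.Iio e) (Set.Iio e) := fun t ht =>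
    (hLw _ (hc t ht).1 (hc t ht).2).bijOn (hc t ht).1 (hc t ht).2
  exact MinimalShuffle.exists_memBd_mul (L := fun t => Lw (c t))
    ⟨he₀, hcard, hL, hv0, hvbij, hletter, hblock, hrun⟩ hlamPerm hhl

/-- If `g` is a minimal-length double coset representative in
`𝔖_{λ^{{e}}} \ 𝔖_{de} / 𝔖_{(e^d)}` sending the concatenation of `d` words in
`I^δ` (each containing every residue once, starting with `0`) to the
divided-power word `l(λ,c)`, then `g = h_λ · b` for a block permutation
`b ∈ B_d` with `ℓ(g) = ℓ(h_λ) + ℓ(b)`. -/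
theorem double_coset_block_factorization
    (e n d : ℕ) (he : 2 ≤ e) (hn : 1 ≤ n) (hd : 1 ≤ d)
    (lam : ℕ → ℕ) (hlam : ∑ t ∈ Finset.range n, lam t = d)
    (c : ℕ → ℕ) (hc : ∀ t, t < n → 1 ≤ c t ∧ c t ≤ e - 1)
    (Lw : ℕ → ℕ → ℕ) (hLw : ∀ jj, 1 ≤ jj → jj ≤ e - 1 → InIDeltaJ e jj (Lw jj))
    (v : ℕ → ℕ → ℕ)
    (hv0 : ∀ a, a < d → v a 0 = 0)
    (hvbij : ∀ a, a < d → ∀ i, i < e → ∃! q, q < e ∧ v a q = i)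
    (w : ℕ → ℕ) (hw : ∀ p, w p = v (p / e) (p % e))
    (W : ℕ → ℕ)
    (hW : ∀ t, t < n → ∀ q, q < e → ∀ a, a < lam t →
      W (e * cumsum lam t + q * lam t + a) = Lw (c t) q)
    (hlamPerm : Equiv.Perm (Fin (d * e)))
    (hhl : ∀ t, t < n → ∀ a, a < lam t → ∀ q, q < e →
      ∀ (hlt : e * cumsum lam t + a * e + q < d * e),
        ((hlamPerm ⟨e * cumsum lam t + a * e + q, hlt⟩ : Fin (d * e)) : ℕ) =
          e * cumsum lam t + q * lam t + a)
    (g : Equiv.Perm (Fin (d * e)))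
    (hg : ∀ p : Fin (d * e), W ((g p : ℕ)) = w ((p : ℕ)))
    (hmin : ∀ h : Equiv.Perm (Fin (d * e)),
      (∃ u u', MemSLamE e n d lam u ∧ MemSed e d u' ∧ h = u * g * u') →
      plen g ≤ plen h) :
    ∃ b : Equiv.Perm (Fin (d * e)), MemBd e d b ∧ g = hlamPerm * b ∧
      plen g = plen hlamPerm + plen b :=
  double_coset_block_factorization_general e n d he lam hlam c hc Lw hLw v hv0 hvbij w hw W hW
    hlamPerm hhl g hg hmin
end

section
/- Let e ≥ 2 and for a partition τ displayed on an abacus with N beads (N large, N ≡ −κ mod e, and m ∈ {0,…,e−1} with m ≡ −κ mod e) let b_{≥l}(τ) = Σ_{i=l}^{e−1} b_i(τ) where b_i(τ) is the number of beads on runner i. Then e·(Λ_κ, cont(τ)) − |τ| = ((e−1)N − (e−m)m)/2 − Σ_{l=1}^{e−1} b_{≥l}(τ), where (Λ_κ, cont(τ)) denotes the number of nodes of residue κ in Y(τ). -/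
open Finset

def beadSet (N : ℕ) (p : ℕ → ℕ) : Finset ℕ :=
  (Finset.Icc 1 N).image (fun k => p k + N - k)

def runnerCount (e N : ℕ) (p : ℕ → ℕ) (i : ℕ) : ℕ :=
  ((beadSet N p).filter (fun x => x % e = i)).card

lemma mod_succ_int (e a : ℤ) (he : 1 < e) :
    (a + 1) % e = if a % e = e - 1 then 0 else a % e + 1 := by
  have h0 : 0 ≤ a % e := Int.emod_nonneg a (by omega)
  have h1 : a % e < e := Int.emod_lt_of_pos a (by omega)
  have hone : (1 : ℤ) % e = 1 := Int.emod_eq_of_lt (by norm_num) he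
  have h2 : (a + 1) % e = (a % e + 1) % e := by
    conv_lhs => rw [Int.add_emod]
    rw [hone]
  split_ifs with h
  · rw [h2, h, sub_add_cancel, Int.emod_self]
  · rw [h2, Int.emod_eq_of_lt (by omega) (by omega)]

lemma key_row (e : ℤ) (he : 1 < e) (c : ℤ) (t : ℕ) :
    e * (((Finset.Icc 1 t).filter (fun s : ℕ => ((s : ℤ) + c) % e = 0)).card : ℤ) - t
      = c % e - ((t : ℤ) + c) % e := by
  have h0 : ∀ a : ℤ, 0 ≤ a % e := fun a => Int.emod_nonneg a (by omega)
  induction t with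
  | zero => simp
  | succ n ih =>
    have hins : Finset.Icc 1 (n + 1) = insert (n + 1) (Finset.Icc 1 n) := by
      ext x; simp; omega
    rw [hins, Finset.filter_insert]
    have hnot : (n + 1) ∉ Finset.Icc 1 n := by simp
    have hms := mod_succ_int e ((n : ℤ) + c) he
    have hpc : (((n + 1 : ℕ)) : ℤ) + c = (n : ℤ) + c + 1 := by push_cast; ring
    by_cases h : ((((n + 1 : ℕ)) : ℤ) + c) % e = 0
    · rw [if_pos h, Finset.card_insert_of_notMem
        (fun hx => hnot (Finset.mem_filter.1 hx).1)]
      have h' : ((n : ℤ) + c + 1) % e = 0 := by rw [← hpc]; exact h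
      rw [hms] at h'
      split_ifs at h' with hc
      · push_cast
        rw [show (n : ℤ) + 1 + c = (n : ℤ) + c + 1 from by ring,
          show ((n : ℤ) + c + 1) % e = 0 from by rw [hms, if_pos hc]]
        rw [hc] at ih
        linarith
      · have := h0 ((n : ℤ) + c); omega
    · rw [if_neg h]
      have h' : ((n : ℤ) + c + 1) % e ≠ 0 := by rw [← hpc]; exact h
      rw [hms] at h'
      have hc : ¬ ((n : ℤ) + c) % e = e - 1 := by
        intro hc; rw [if_pos hc] at h'; exact h' rfl
      push_cast
      rw [show (n : ℤ) + 1 + c = (n : ℤ) + c + 1 from by ring,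
        hms, if_neg hc]
      push_cast at ih
      linarith

lemma sum_mod_range (e : ℕ) (he : 2 ≤ e) (N : ℕ) :
    2 * ∑ j ∈ Finset.range N, ((j % e : ℕ) : ℤ)
      = ((e : ℤ) - 1) * N - ((e : ℤ) - ((N % e : ℕ) : ℤ)) * ((N % e : ℕ) : ℤ) := by
  induction N with
  | zero => simp
  | succ n ih =>
    rw [Finset.sum_range_succ, mul_add]
    have hlt : n % e < e := Nat.mod_lt n (by omega)
    have h1 : (n + 1) % e = (n % e + 1) % e := by
      rw [Nat.add_mod, Nat.mod_eq_of_lt (by omega : 1 < e)]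
    by_cases h : n % e = e - 1
    · have h2 : (n + 1) % e = 0 := by
        rw [h1, h, Nat.sub_add_cancel (by omega), Nat.mod_self]
      have hcast : ((e - 1 : ℕ) : ℤ) = (e : ℤ) - 1 := Nat.cast_sub (by omega)
      rw [h] at ih
      rw [hcast] at ih
      rw [h2, h, hcast,
        show ((0 : ℕ) : ℤ) = 0 from rfl,
        show ((n + 1 : ℕ) : ℤ) = (n : ℤ) + 1 from by push_cast; ring]
      linear_combination ih
    · have h2 : (n + 1) % e = n % e + 1 := by
        rw [h1, Nat.mod_eq_of_lt (by omega)]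
      rw [h2,
        show ((n % e + 1 : ℕ) : ℤ) = ((n % e : ℕ) : ℤ) + 1 from by push_cast; ring,
        show ((n + 1 : ℕ) : ℤ) = (n : ℤ) + 1 from by push_cast; ring]
      linear_combination ih

/-- For a partition `τ` displayed on an abacus with `N` beads
(`N ≡ m ≡ -κ (mod e)`), writing `b_{≥l}(τ) = ∑_{i=l}^{e-1} b_i(τ)` and letting
`(Λ_κ, cont τ)` be the number of nodes of residue `κ` in `Y(τ)`:
`e·(Λ_κ, cont τ) - |τ| = ((e-1)N - (e-m)m)/2 - ∑_{l=1}^{e-1} b_{≥l}(τ)`. -/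
theorem residue_count_abacus_formula
    (e N m : ℕ) (he : 2 ≤ e) (hm : m < e) (hNm : N % e = m)
    (tau : ℕ → ℕ)
    (htaup : ∀ k, 1 ≤ k → tau (k + 1) ≤ tau k)
    (htauv : ∀ k, N < k → tau k = 0) :
    (e : ℤ) * (∑ r ∈ Finset.Icc 1 N,
        (((Finset.Icc 1 (tau r)).filter
          (fun (s : ℕ) => ((s : ℤ) - (r : ℤ) + (m : ℤ)) % (e : ℤ) = 0)).card : ℤ))
      - (∑ r ∈ Finset.Icc 1 N, (tau r : ℤ)) =
      (((e : ℤ) - 1) * (N : ℤ) - ((e : ℤ) - (m : ℤ)) * (m : ℤ)) / 2 -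
        ∑ l ∈ Finset.Icc 1 (e - 1),
          ∑ i ∈ Finset.Ico l e, (runnerCount e N tau i : ℤ) := by
  have heZ : (1 : ℤ) < (e : ℤ) := by exact_mod_cast he
  -- monotonicity of tau on [1, ∞)
  have mono : ∀ j k, 1 ≤ j → j ≤ k → tau k ≤ tau j := by
    intro j k hj
    induction k with
    | zero => intro h; omega
    | succ n ih =>
      intro hjk
      rcases Nat.eq_or_lt_of_le hjk with h | h
      · rw [h]
      · exact le_trans (htaup n (by omega)) (ih (by omega))
  have hmodNM : (N : ℤ) % (e : ℤ) = (m : ℤ) % (e : ℤ) := by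
    rw [← Int.natCast_mod, hNm, Int.emod_eq_of_lt (by positivity) (by exact_mod_cast hm)]
  -- per-row identity
  have hrow : ∀ r ∈ Finset.Icc 1 N,
      (e : ℤ) * (((Finset.Icc 1 (tau r)).filter
          (fun (s : ℕ) => ((s : ℤ) - (r : ℤ) + (m : ℤ)) % (e : ℤ) = 0)).card : ℤ)
        - (tau r : ℤ)
      = (((N - r) % e : ℕ) : ℤ) - (((tau r + N - r) % e : ℕ) : ℤ) := by
    intro r hr
    rw [Finset.mem_Icc] at hr
    have hfilt : (Finset.Icc 1 (tau r)).filter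
          (fun (s : ℕ) => ((s : ℤ) - (r : ℤ) + (m : ℤ)) % (e : ℤ) = 0)
        = (Finset.Icc 1 (tau r)).filter
          (fun (s : ℕ) => ((s : ℤ) + ((m : ℤ) - (r : ℤ))) % (e : ℤ) = 0) := by
      apply Finset.filter_congr
      intro s _
      rw [show (s : ℤ) - (r : ℤ) + (m : ℤ) = (s : ℤ) + ((m : ℤ) - (r : ℤ)) from by ring]
    have hc1 : (((N - r) % e : ℕ) : ℤ) = ((m : ℤ) - (r : ℤ)) % (e : ℤ) := by
      rw [Int.natCast_mod, Nat.cast_sub hr.2, Int.sub_emod, hmodNM, ← Int.sub_emod]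
    have hc2 : (((tau r + N - r) % e : ℕ) : ℤ)
        = ((tau r : ℤ) + ((m : ℤ) - (r : ℤ))) % (e : ℤ) := by
      rw [Int.natCast_mod, Nat.cast_sub (le_trans hr.2 (Nat.le_add_left N (tau r))),
        show ((tau r + N : ℕ) : ℤ) - (r : ℤ)
            = (tau r : ℤ) + ((N : ℤ) - (r : ℤ)) from by push_cast; ring,
        Int.add_emod, Int.sub_emod (N : ℤ), hmodNM, ← Int.sub_emod, ← Int.add_emod]
    rw [hfilt, hc1, hc2]
    exact key_row (e : ℤ) heZ ((m : ℤ) - (r : ℤ)) (tau r)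
  -- sum of first terms
  have hS1 : ∑ r ∈ Finset.Icc 1 N, (((N - r) % e : ℕ) : ℤ)
      = ∑ j ∈ Finset.range N, ((j % e : ℕ) : ℤ) := by
    apply Finset.sum_nbij' (i := fun r => N - r) (j := fun x => N - x)
    · intro a ha; rw [Finset.mem_Icc] at ha; rw [Finset.mem_range]; omega
    · intro a ha; rw [Finset.mem_range] at ha; rw [Finset.mem_Icc]; omega
    · intro a ha; rw [Finset.mem_Icc] at ha; omega
    · intro a ha; rw [Finset.mem_range] at ha; omega
    · intro a ha; rfl
  have hdiv : (((e : ℤ) - 1) * (N : ℤ) - ((e : ℤ) - (m : ℤ)) * (m : ℤ)) / 2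
      = ∑ j ∈ Finset.range N, ((j % e : ℕ) : ℤ) := by
    have hsm := sum_mod_range e he N
    rw [hNm] at hsm
    rw [← hsm, Int.mul_ediv_cancel_left _ two_ne_zero]
  -- bead set sum
  have hinj : ∀ j ∈ Finset.Icc 1 N, ∀ k ∈ Finset.Icc 1 N,
      tau j + N - j = tau k + N - k → j = k := by
    intro j hj k hk hjk
    rw [Finset.mem_Icc] at hj hk
    rcases lt_trichotomy j k with h | h | h
    · have := mono j k hj.1 (le_of_lt h); omega
    · exact h
    · have := mono k j hk.1 (le_of_lt h); omega
  have hS2 : ∑ x ∈ beadSet N tau, ((x % e : ℕ) : ℤ)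
      = ∑ r ∈ Finset.Icc 1 N, (((tau r + N - r) % e : ℕ) : ℤ) := by
    unfold beadSet
    rw [Finset.sum_image hinj]
  -- runner sums
  have hC : ∑ l ∈ Finset.Icc 1 (e - 1), ∑ i ∈ Finset.Ico l e, (runnerCount e N tau i : ℤ)
      = ∑ x ∈ beadSet N tau, ((x % e : ℕ) : ℤ) := by
    have step1 : ∀ l, ∑ i ∈ Finset.Ico l e, (runnerCount e N tau i : ℤ)
        = ∑ i ∈ Finset.range e, if l ≤ i then (runnerCount e N tau i : ℤ) else 0 := by
      intro l
      rw [← Finset.sum_filter]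
      congr 1
      ext i
      simp only [Finset.mem_Ico, Finset.mem_filter, Finset.mem_range]
      omega
    simp only [step1]
    rw [Finset.sum_comm]
    have step2 : ∀ i ∈ Finset.range e,
        (∑ l ∈ Finset.Icc 1 (e - 1), if l ≤ i then (runnerCount e N tau i : ℤ) else 0)
          = (i : ℤ) * (runnerCount e N tau i : ℤ) := by
      intro i hi
      rw [Finset.mem_range] at hi
      rw [← Finset.sum_filter,
        show (Finset.Icc 1 (e - 1)).filter (fun l => l ≤ i) = Finset.Icc 1 i from by
          ext l; simp only [Finset.mem_filter, Finset.mem_Icc]; omega,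
        Finset.sum_const, Nat.card_Icc, nsmul_eq_mul]
      norm_num
    rw [Finset.sum_congr rfl step2,
      ← Finset.sum_fiberwise_of_maps_to
        (g := fun x => x % e) (t := Finset.range e)
        (fun x _ => Finset.mem_range.2 (Nat.mod_lt x (by omega)))
        (fun x => ((x % e : ℕ) : ℤ))]
    apply Finset.sum_congr rfl
    intro i _
    unfold runnerCount
    rw [Finset.sum_congr rfl (fun x hx => by rw [(Finset.mem_filter.1 hx).2]),
      Finset.sum_const, nsmul_eq_mul]
    ring
  rw [Finset.mul_sum, ← Finset.sum_sub_distrib,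
    show (∑ r ∈ Finset.Icc 1 N, ((e : ℤ) * (((Finset.Icc 1 (tau r)).filter
          (fun (s : ℕ) => ((s : ℤ) - (r : ℤ) + (m : ℤ)) % (e : ℤ) = 0)).card : ℤ)
        - (tau r : ℤ)))
      = ∑ r ∈ Finset.Icc 1 N,
          ((((N - r) % e : ℕ) : ℤ) - (((tau r + N - r) % e : ℕ) : ℤ))
      from Finset.sum_congr rfl hrow,
    Finset.sum_sub_distrib, hS1, hdiv, hC, hS2]
end

section
/- Let e ≥ 2, n ≥ 1, d ≥ 0, J = {1,…,e−1}, and let Z be the zigzag algebra of type A_{e−1} over ℤ with basis B_Z of size 4e−6. Let W_d = Z^{⊗d} ⋊ ℤS_d and let (λ,c) ∈ Λ(n,d) × J^n be a colored composition with d_j = Σ_{c_r=j} λ_r for each j ∈ J. Then the colored permutation module M_{λ,c} = alt_{λ,c} ⊗_{W_{λ,c}} e_{λ,c} W_d is a free ℤ-module of rank |S_d : S_λ| · 3^{d_1+d_{e−1}} · 4^{Σ_{j=2}^{e−2} d_j} when e > 2, and of rank |S_d : S_λ| · 2^{d_1} when e = 2. -/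
/-!
The relations identify the basis vector `(x, g)` with `ε(h) • (h • x, h * g)` for `h ∈ 𝔖_λ`.
Fixing a representative of every right coset `𝔖_λ g`, each basis vector becomes `±` a vector
`(x', ρ)` with `ρ` a representative, and since `ε` is a character of `𝔖_λ` this normal form is
consistent, so the quotient is free on pairs (tensor label, right coset). This works verbatim for
any subgroup `H ≤ G`, `H`-set `X` and character `χ : H →* R`. The rank is then `|𝔖_d : 𝔖_λ|`
times the number of tensor labels, which is `∏_j (rank e_j Z) ^ d_j`.

`ε` is a character because every element of `𝔖_λ` permutes, as unordered pairs, the pairs of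
positions lying in a common block of even colour, and counting inversions on such a stable set of
pairs is multiplicative.
-/

open Finset

/-- Labels of the `ℤ`-basis of `e_j Z` for the zigzag algebra `Z` of type
`A_{e-1}`: `0 ↦ e_j`, `1 ↦ c e_j`, `2 ↦ a^{j,j-1}` (if `j ≥ 2`),
`3 ↦ a^{j,j+1}` (if `j+1 ≤ e-1`). -/
def allowedT (e j : ℕ) : Finset ℕ :=
  ({0, 1} : Finset ℕ) ∪ (if 2 ≤ j then ({2} : Finset ℕ) else ∅) ∪
    (if j + 1 ≤ e - 1 then ({3} : Finset ℕ) else ∅)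

/-- Index of the part of the composition `lam` (with `n` parts) containing the
0-based position `r < d`. -/
def blockOf (n : ℕ) (lam : ℕ → ℕ) (r : ℕ) : ℕ :=
  ((Finset.range n).filter (fun t => (∑ t' ∈ Finset.range (t + 1), lam t') ≤ r)).card

/-- Basis labels of `e_{λ,c} W_d` as a `ℤ`-module: a tuple of basis elements of
`e_{c_r} Z` (one for each tensor position, coloured by the part of `λ`
containing it) together with an element of `𝔖_d`. -/
def WBasisIdx (e n d : ℕ) (lam c : ℕ → ℕ) : Type :=
  {x : Fin d → ℕ // ∀ r : Fin d, x r ∈ allowedT e (c (blockOf n lam (r : ℕ)))} ×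
    Equiv.Perm (Fin d)

/-- Membership in the parabolic subgroup `𝔖_λ ≤ 𝔖_d`. -/
def MemSlam (n d : ℕ) (lam : ℕ → ℕ) (h : Equiv.Perm (Fin d)) : Prop :=
  ∀ r : Fin d, blockOf n lam ((h r : ℕ)) = blockOf n lam ((r : ℕ))

/-- The sign `ε_{λ,c}(h) = ∏_t ζ_{c_t}^{ℓ(h_t)}` (where `ζ_j = (-1)^{j+1}`):
`(-1)` to the number of inversions of `h` lying inside blocks of even colour. -/
def epsSign (n d : ℕ) (lam c : ℕ → ℕ) (h : Equiv.Perm (Fin d)) : ℤ :=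
  (-1) ^ ((Finset.univ.filter (fun p : Fin d × Fin d =>
      p.1 < p.2 ∧ blockOf n lam ((p.1 : ℕ)) = blockOf n lam ((p.2 : ℕ)) ∧
      Even (c (blockOf n lam ((p.1 : ℕ)))) ∧ h p.2 < h p.1)).card)

/-- The submodule of relations defining
`M_{λ,c} = alt_{λ,c} ⊗_{W_{λ,c}} e_{λ,c} W_d` as a quotient of the free
`ℤ`-module on `WBasisIdx`: for `h ∈ 𝔖_λ`, the left action
`h·(x ⊗ g) = (x ∘ h⁻¹) ⊗ hg` is identified with multiplication by `ε(h)`. -/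
noncomputable def altRelations (e n d : ℕ) (lam c : ℕ → ℕ) :
    Submodule ℤ (WBasisIdx e n d lam c →₀ ℤ) :=
  Submodule.span ℤ
    {y | ∃ h : Equiv.Perm (Fin d), MemSlam n d lam h ∧
      ∃ x x' : {x : Fin d → ℕ //
          ∀ r : Fin d, x r ∈ allowedT e (c (blockOf n lam (r : ℕ)))},
      ∃ g : Equiv.Perm (Fin d),
        (∀ r : Fin d, x'.1 r = x.1 (h⁻¹ r)) ∧
        y = epsSign n d lam c h • Finsupp.single ((x', h * g) : WBasisIdx e n d lam c) (1 : ℤ)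
              - Finsupp.single ((x, g) : WBasisIdx e n d lam c) (1 : ℤ)}

section TwistedInduction

variable {R G X : Type*} [CommRing R] [Group G] (H : Subgroup G) [MulAction H X] (χ : H →* R)

abbrev RightCosets : Type _ := Quotient (QuotientGroup.rightRel H)

noncomputable def twistedRelations : Submodule R (X × G →₀ R) :=
  Submodule.span R {y | ∃ (h : H) (x : X) (g : G),
    y = χ h • Finsupp.single (h • x, (h : G) * g) 1 - Finsupp.single (x, g) 1}

variable {H} in
theorem rightCosets_mk_mul (h : H) (g : G) :
    (Quotient.mk _ ((h : G) * g) : RightCosets H) = Quotient.mk _ g :=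
  Quotient.sound (QuotientGroup.rightRel_apply.2 (by simp))

noncomputable def cosetShift (g : G) : H :=
  ⟨(Quotient.mk _ g : RightCosets H).out * g⁻¹, by
    simpa using H.inv_mem
      (QuotientGroup.rightRel_apply.1 (Quotient.mk_out (s := QuotientGroup.rightRel H) g))⟩

theorem cosetShift_mul_self (g : G) :
    (cosetShift H g : G) * g = (Quotient.mk _ g : RightCosets H).out := by
  simp [cosetShift]

theorem cosetShift_mul (h : H) (g : G) : cosetShift H ((h : G) * g) = cosetShift H g * h⁻¹ := by
  ext
  simp [cosetShift, rightCosets_mk_mul, mul_assoc]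

theorem cosetShift_out (q : RightCosets H) : cosetShift H q.out = 1 := by
  ext
  simp [cosetShift, Quotient.out_eq]

noncomputable def toInducedBasis : (X × G →₀ R) →ₗ[R] (X × RightCosets H →₀ R) :=
  Finsupp.linearCombination R fun w =>
    Finsupp.single (cosetShift H w.2 • w.1, Quotient.mk _ w.2) (χ (cosetShift H w.2))

theorem toInducedBasis_single (x : X) (g : G) :
    toInducedBasis H χ (Finsupp.single (x, g) 1) =
      Finsupp.single (cosetShift H g • x, Quotient.mk _ g) (χ (cosetShift H g)) := by
  simp [toInducedBasis]

theorem twistedRelations_le_ker :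
    (twistedRelations H χ : Submodule R (X × G →₀ R)) ≤ LinearMap.ker (toInducedBasis H χ) := by
  rw [twistedRelations, Submodule.span_le]
  rintro _ ⟨h, x, g, rfl⟩
  rw [SetLike.mem_coe, LinearMap.mem_ker, map_sub, map_smul, toInducedBasis_single,
    toInducedBasis_single, cosetShift_mul, rightCosets_mk_mul, mul_smul, inv_smul_smul,
    Finsupp.smul_single, smul_eq_mul, mul_comm, ← map_mul, inv_mul_cancel_right, sub_self]

theorem smul_mkQ_single_smul_mul (h : H) (x : X) (g : G) :
    χ h • (twistedRelations H χ).mkQ (Finsupp.single ((h • x : X), (h : G) * g) 1) =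
      (twistedRelations H χ).mkQ (Finsupp.single (x, g) 1) := by
  rw [← map_smul, Submodule.mkQ_apply, Submodule.mkQ_apply, Submodule.Quotient.eq]
  exact Submodule.subset_span ⟨h, x, g, rfl⟩

noncomputable def ofInducedBasis :
    (X × RightCosets H →₀ R) →ₗ[R] (X × G →₀ R) ⧸ twistedRelations H χ :=
  Finsupp.linearCombination R fun b =>
    (twistedRelations H χ).mkQ (Finsupp.single (b.1, b.2.out) 1)

theorem ofInducedBasis_single (x : X) (q : RightCosets H) :
    ofInducedBasis H χ (Finsupp.single (x, q) 1) =
      (twistedRelations H χ).mkQ (Finsupp.single (x, q.out) 1) := by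
  simp [ofInducedBasis]

noncomputable def twistedInducedEquiv :
    ((X × G →₀ R) ⧸ twistedRelations H χ) ≃ₗ[R] (X × RightCosets H →₀ R) :=
  LinearEquiv.ofLinearMap ((twistedRelations H χ).liftQ _ (twistedRelations_le_ker H χ))
    (ofInducedBasis H χ)
    (by
      ext ⟨x, q⟩ : 2
      simp only [LinearMap.comp_apply, Finsupp.lsingle_apply, ofInducedBasis_single,
        Submodule.mkQ_apply, Submodule.liftQ_apply, toInducedBasis_single, cosetShift_out,
        one_smul, map_one, Quotient.out_eq, LinearMap.id_apply])
    (by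
      ext ⟨x, g⟩ : 3
      simp only [LinearMap.comp_apply, Finsupp.lsingle_apply, Submodule.mkQ_apply,
        Submodule.liftQ_apply, toInducedBasis_single, LinearMap.id_apply]
      rw [← Finsupp.smul_single_one, map_smul, ofInducedBasis_single, ← cosetShift_mul_self,
        smul_mkQ_single_smul_mul, Submodule.mkQ_apply])

theorem free_quotient_twistedRelations : Module.Free R ((X × G →₀ R) ⧸ twistedRelations H χ) :=
  Module.Free.of_equiv (twistedInducedEquiv H χ).symm

theorem finrank_quotient_twistedRelations [Nontrivial R] [Finite X] [Finite G] :
    Module.finrank R ((X × G →₀ R) ⧸ twistedRelations H χ) = Nat.card X * H.index := by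
  have : Fintype (X × RightCosets H) := Fintype.ofFinite _
  rw [(twistedInducedEquiv H χ).finrank_eq, Module.finrank_finsupp_self,
    ← Nat.card_eq_fintype_card, Nat.card_prod, H.index_eq_card,
    Nat.card_congr (QuotientGroup.quotientRightRelEquivQuotientLeftRel H)]

end TwistedInduction

section InversionSign

variable {α : Type*} [LinearOrder α]

def sortedImage (τ : Equiv.Perm α) (p : α × α) : α × α :=
  if τ p.1 < τ p.2 then (τ p.1, τ p.2) else (τ p.2, τ p.1)

def inversionSign (σ : Equiv.Perm α) (p : α × α) : ℤ :=
  if σ p.2 < σ p.1 then -1 else 1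

theorem inversionSign_mul_apply (σ τ : Equiv.Perm α) {p : α × α} (hp : p.1 ≠ p.2) :
    inversionSign (σ * τ) p = inversionSign σ (sortedImage τ p) * inversionSign τ p := by
  have hτ : τ p.1 ≠ τ p.2 := τ.injective.ne hp
  have hστ : σ (τ p.1) ≠ σ (τ p.2) := σ.injective.ne hτ
  unfold inversionSign sortedImage
  simp only [Equiv.Perm.mul_apply]
  split_ifs <;> grind

theorem sortedImage_inv_sortedImage (τ : Equiv.Perm α) {p : α × α} (hp : p.1 < p.2) :
    sortedImage τ⁻¹ (sortedImage τ p) = p := by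
  unfold sortedImage
  split_ifs <;> simp only [Equiv.Perm.coe_inv, Equiv.symm_apply_apply] at * <;> grind

theorem prod_inversionSign_mul {Q : Finset (α × α)} (hQ : ∀ p ∈ Q, p.1 < p.2)
    (σ τ : Equiv.Perm α) (hτ : ∀ p ∈ Q, sortedImage τ p ∈ Q)
    (hτ' : ∀ p ∈ Q, sortedImage τ⁻¹ p ∈ Q) :
    ∏ p ∈ Q, inversionSign (σ * τ) p =
      (∏ p ∈ Q, inversionSign σ p) * ∏ p ∈ Q, inversionSign τ p := by
  rw [prod_congr rfl fun p hp => inversionSign_mul_apply σ τ (hQ p hp).ne, prod_mul_distrib]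
  congr 1
  refine prod_nbij' (sortedImage τ) (sortedImage τ⁻¹) hτ hτ'
    (fun p hp => sortedImage_inv_sortedImage τ (hQ p hp)) (fun p hp => ?_) fun _ _ => rfl
  simpa using sortedImage_inv_sortedImage τ⁻¹ (hQ p hp)

end InversionSign

section Blocks

variable {n : ℕ} {lam : ℕ → ℕ}

theorem le_blockOf_iff {k r : ℕ} :
    k ≤ blockOf n lam r ↔ k ≤ n ∧ ∑ t ∈ range k, lam t ≤ r := by
  constructor
  · intro hk
    refine ⟨hk.trans ((card_filter_le _ _).trans (card_range n).le), ?_⟩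
    by_contra! hr
    cases k with
    | zero => simp at hr
    | succ k =>
      have hsub : (range n).filter (fun t => ∑ t' ∈ range (t + 1), lam t' ≤ r) ⊆ range k :=
        fun t ht => mem_range.2 <| by
          by_contra! hkt
          exact ((mem_filter.1 ht).2.trans_lt hr).not_ge
            (sum_le_sum_of_subset (range_subset_range.2 (by omega)))
      have := card_le_card hsub
      rw [card_range] at this
      unfold blockOf at hk
      omega
  · rintro ⟨hkn, hk⟩
    have hsub : range k ⊆ (range n).filter (fun t => ∑ t' ∈ range (t + 1), lam t' ≤ r) :=
      fun t ht => mem_filter.2 ⟨range_subset_range.2 hkn ht,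
        (sum_le_sum_of_subset (range_subset_range.2 (mem_range.1 ht))).trans hk⟩
    simpa [blockOf] using card_le_card hsub

theorem blockOf_eq_iff {r t : ℕ} (ht : t < n) :
    blockOf n lam r = t ↔ ∑ t' ∈ range t, lam t' ≤ r ∧ r < ∑ t' ∈ range (t + 1), lam t' := by
  rw [le_antisymm_iff, ← not_lt, Nat.lt_iff_add_one_le, le_blockOf_iff, le_blockOf_iff]
  omega

theorem blockOf_lt {r : ℕ} (hr : r < ∑ t ∈ range n, lam t) : blockOf n lam r < n := by
  by_contra! h
  exact (le_blockOf_iff.1 h).2.not_gt hr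

theorem card_blockOf_fiber {d t : ℕ} (hlam : ∑ t ∈ range n, lam t = d) (ht : t < n) :
    #{r : Fin d | blockOf n lam r = t} = lam t := by
  have hend : ∑ t' ∈ range (t + 1), lam t' ≤ d :=
    hlam ▸ sum_le_sum_of_subset (range_subset_range.2 ht)
  rw [← Nat.add_sub_cancel_left (n := ∑ t' ∈ range t, lam t') (m := lam t), ← sum_range_succ,
    ← Nat.card_Ico]
  refine card_bij (fun r _ => (r : ℕ)) (fun r hr => ?_) (fun _ _ _ _ => Fin.ext) fun b hb => ?_
  · simpa [blockOf_eq_iff ht] using hr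
  · rw [mem_Ico] at hb
    exact ⟨⟨b, by omega⟩, by simpa [blockOf_eq_iff ht] using hb, rfl⟩

theorem prod_comp_blockOf {M : Type*} [CommMonoid M] {d : ℕ} (hlam : ∑ t ∈ range n, lam t = d)
    (f : ℕ → M) : ∏ r : Fin d, f (blockOf n lam r) = ∏ t ∈ range n, f t ^ lam t := by
  rw [← prod_fiberwise_of_maps_to (g := fun r : Fin d => blockOf n lam r) (t := range n)
    fun r _ => mem_range.2 (blockOf_lt (hlam ▸ r.2))]
  refine prod_congr rfl fun t ht => ?_
  rw [prod_congr rfl fun r hr => congrArg f (mem_filter.1 hr).2, prod_const,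
    card_blockOf_fiber hlam (mem_range.1 ht)]

end Blocks

section YoungSubgroup

open Nat in
theorem card_perm_comp_eq_self {α ι : Type*} [Fintype α] [DecidableEq α] [DecidableEq ι]
    (f : α → ι) {s : Finset ι} (hs : ∀ a, f a ∈ s) :
    Fintype.card {g : Equiv.Perm α // f ∘ g = f} = ∏ i ∈ s, (#{a | f a = i})! := by
  rw [DomMulAct.stabilizer_card']
  refine (prod_subset (fun i hi => ?_) fun i _ hi => ?_).trans
    (prod_congr rfl fun i _ => by rw [Fintype.card_subtype])
  · obtain ⟨a, -, rfl⟩ := mem_image.1 hi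
    exact hs a
  · rw [Fintype.card_eq_zero_iff.2 ⟨fun a => hi (mem_image.2 ⟨a.1, mem_univ _, a.2⟩)⟩,
      factorial_zero]

def youngSubgroup (n d : ℕ) (lam : ℕ → ℕ) : Subgroup (Equiv.Perm (Fin d)) where
  carrier := {h | MemSlam n d lam h}
  mul_mem' ha hb r := (ha _).trans (hb r)
  one_mem' _ := rfl
  inv_mem' {h} ha r := by simpa using (ha (h⁻¹ r)).symm

variable {n d : ℕ} {lam : ℕ → ℕ}

open Nat in
theorem card_youngSubgroup (hlam : ∑ t ∈ range n, lam t = d) :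
    Nat.card (youngSubgroup n d lam) = ∏ t ∈ range n, (lam t)! := by
  classical
  let block : Fin d → ℕ := fun r => blockOf n lam r
  have hmem : ∀ g, g ∈ youngSubgroup n d lam ↔ block ∘ g = block := fun g => funext_iff.symm
  rw [Nat.card_congr (Equiv.subtypeEquivRight hmem), Nat.card_eq_fintype_card,
    card_perm_comp_eq_self block fun r => mem_range.2 (blockOf_lt (hlam ▸ r.2))]
  exact prod_congr rfl fun t ht => by rw [card_blockOf_fiber hlam (mem_range.1 ht)]

theorem index_youngSubgroup (hlam : ∑ t ∈ range n, lam t = d) :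
    (youngSubgroup n d lam).index = Nat.multinomial (range n) lam := by
  refine Nat.eq_of_mul_eq_mul_right (prod_pos fun t (_ : t ∈ range n) => (lam t).factorial_pos) ?_
  nth_rw 1 [← card_youngSubgroup hlam]
  rw [Subgroup.index_mul_card, Nat.card_perm, Nat.card_eq_fintype_card, Fintype.card_fin,
    mul_comm, Nat.multinomial_spec, hlam]

end YoungSubgroup

section Sign

variable {n d : ℕ} {lam c : ℕ → ℕ}

def evenBlockPairs (n d : ℕ) (lam c : ℕ → ℕ) : Finset (Fin d × Fin d) :=
  {p | p.1 < p.2 ∧ blockOf n lam p.1 = blockOf n lam p.2 ∧ Even (c (blockOf n lam p.1))}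

theorem lt_of_mem_evenBlockPairs {p : Fin d × Fin d} (hp : p ∈ evenBlockPairs n d lam c) :
    p.1 < p.2 :=
  (mem_filter.1 hp).2.1

theorem epsSign_eq_prod_inversionSign (σ : Equiv.Perm (Fin d)) :
    epsSign n d lam c σ = ∏ p ∈ evenBlockPairs n d lam c, inversionSign σ p := by
  simp only [epsSign, inversionSign, prod_ite, prod_const, one_pow, mul_one,
    evenBlockPairs, filter_filter, and_assoc]

theorem sortedImage_mem_evenBlockPairs {τ : Equiv.Perm (Fin d)}
    (hτ : τ ∈ youngSubgroup n d lam) {p : Fin d × Fin d} (hp : p ∈ evenBlockPairs n d lam c) :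
    sortedImage τ p ∈ evenBlockPairs n d lam c := by
  have h1 : blockOf n lam (τ p.1) = blockOf n lam p.1 := hτ p.1
  have h2 : blockOf n lam (τ p.2) = blockOf n lam p.2 := hτ p.2
  have hne : τ p.1 ≠ τ p.2 := τ.injective.ne (lt_of_mem_evenBlockPairs hp).ne
  simp only [evenBlockPairs, mem_filter, mem_univ, true_and] at hp ⊢
  unfold sortedImage
  split_ifs <;> grind

theorem epsSign_mul (σ : Equiv.Perm (Fin d)) {τ : Equiv.Perm (Fin d)}
    (hτ : τ ∈ youngSubgroup n d lam) :
    epsSign n d lam c (σ * τ) = epsSign n d lam c σ * epsSign n d lam c τ := by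
  simp only [epsSign_eq_prod_inversionSign]
  exact prod_inversionSign_mul (fun _ => lt_of_mem_evenBlockPairs) σ τ
    (fun _ => sortedImage_mem_evenBlockPairs hτ)
    (fun _ => sortedImage_mem_evenBlockPairs (inv_mem hτ))

theorem epsSign_one : epsSign n d lam c 1 = 1 := by
  rw [epsSign_eq_prod_inversionSign]
  exact prod_eq_one fun p hp => if_neg (lt_of_mem_evenBlockPairs hp).not_gt

variable (n d lam c) in
def epsSignHom : youngSubgroup n d lam →* ℤ where
  toFun h := epsSign n d lam c h
  map_one' := by simpa using epsSign_one
  map_mul' a b := by simpa using epsSign_mul a b.2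

end Sign

section TensorLabels

abbrev TensorLabels (e n d : ℕ) (lam c : ℕ → ℕ) : Type :=
  {x : Fin d → ℕ // ∀ r : Fin d, x r ∈ allowedT e (c (blockOf n lam r))}

variable {e n d : ℕ} {lam c : ℕ → ℕ}

instance : MulAction (youngSubgroup n d lam) (TensorLabels e n d lam c) where
  smul h x := ⟨fun r => x.1 ((h : Equiv.Perm (Fin d))⁻¹ r),
    fun r => inv_mem h.2 r ▸ x.2 ((h : Equiv.Perm (Fin d))⁻¹ r)⟩
  one_smul _ := rfl
  mul_smul _ _ _ := rfl

instance : Finite (TensorLabels e n d lam c) :=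
  Finite.of_equiv _ Equiv.subtypePiEquivPi.symm

theorem card_tensorLabels (hlam : ∑ t ∈ range n, lam t = d) :
    Nat.card (TensorLabels e n d lam c) = ∏ t ∈ range n, #(allowedT e (c t)) ^ lam t := by
  rw [Nat.card_congr Equiv.subtypePiEquivPi, Nat.card_pi]
  simp only [Nat.card_eq_fintype_card, Fintype.card_coe]
  exact prod_comp_blockOf hlam fun t => #(allowedT e (c t))

theorem altRelations_eq_twistedRelations :
    altRelations e n d lam c =
      twistedRelations (youngSubgroup n d lam) (epsSignHom n d lam c) := by
  rw [altRelations, twistedRelations]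
  congr 1
  ext y
  constructor
  · rintro ⟨h, hh, x, x', g, hx', rfl⟩
    obtain rfl : x' = (⟨h, hh⟩ : youngSubgroup n d lam) • x := Subtype.ext (funext hx')
    exact ⟨⟨h, hh⟩, x, g, rfl⟩
  · rintro ⟨h, x, g, rfl⟩
    exact ⟨h, h.2, x, h • x, g, fun r => rfl, rfl⟩

theorem free_quotient_altRelations :
    Module.Free ℤ ((WBasisIdx e n d lam c →₀ ℤ) ⧸ altRelations e n d lam c) := by
  rw [altRelations_eq_twistedRelations]
  exact free_quotient_twistedRelations _ _

theorem finrank_quotient_altRelations :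
    Module.finrank ℤ ((WBasisIdx e n d lam c →₀ ℤ) ⧸ altRelations e n d lam c) =
      Nat.card (TensorLabels e n d lam c) * (youngSubgroup n d lam).index := by
  rw [altRelations_eq_twistedRelations]
  exact finrank_quotient_twistedRelations _ _

end TensorLabels

section Colours

theorem prod_pow_eq_prod_fiberwise {M : Type*} [CommMonoid M] {n : ℕ} {lam c : ℕ → ℕ}
    (f : ℕ → M) {s : Finset ℕ} (hc : ∀ t < n, c t ∈ s) :
    ∏ t ∈ range n, f (c t) ^ lam t =
      ∏ j ∈ s, f j ^ ∑ t ∈ (range n).filter (fun t => c t = j), lam t := by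
  rw [← prod_fiberwise_of_maps_to (g := c) fun t ht => hc t (mem_range.1 ht)]
  refine prod_congr rfl fun j _ => ?_
  rw [← prod_pow_eq_pow_sum]
  exact prod_congr rfl fun t ht => by rw [(mem_filter.1 ht).2]

variable {e : ℕ}

theorem card_allowedT_one (he : 2 < e) : #(allowedT e 1) = 3 := by
  rw [allowedT, if_neg (by omega), if_pos (by omega)]
  decide

theorem card_allowedT_sub_one (he : 2 < e) : #(allowedT e (e - 1)) = 3 := by
  rw [allowedT, if_pos (by omega), if_neg (by omega)]
  decide

theorem card_allowedT_two_one : #(allowedT 2 1) = 2 := rfl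

theorem card_allowedT_of_mem_Icc {j : ℕ} (hj : j ∈ Icc 2 (e - 2)) : #(allowedT e j) = 4 := by
  rw [mem_Icc] at hj
  rw [allowedT, if_pos hj.1, if_pos (by omega)]
  decide

theorem prod_Icc_card_allowedT_pow (he : 2 < e) (m : ℕ → ℕ) :
    ∏ j ∈ Icc 1 (e - 1), #(allowedT e j) ^ m j =
      3 ^ (m 1 + m (e - 1)) * 4 ^ ∑ j ∈ Icc 2 (e - 2), m j := by
  have hsplit : Icc 1 (e - 1) = insert 1 (insert (e - 1) (Icc 2 (e - 2))) := by
    ext j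
    simp only [mem_Icc, mem_insert]
    omega
  rw [hsplit, prod_insert (by simp; omega), prod_insert (by simp; omega),
    card_allowedT_one he, card_allowedT_sub_one he,
    prod_congr rfl fun j hj => by rw [card_allowedT_of_mem_Icc hj], prod_pow_eq_pow_sum,
    pow_add, mul_assoc]

end Colours

theorem colored_permutation_module_rank_general
    (e n d : ℕ)
    (lam : ℕ → ℕ) (hlam : ∑ t ∈ Finset.range n, lam t = d)
    (c : ℕ → ℕ) (hc : ∀ t, t < n → 1 ≤ c t ∧ c t ≤ e - 1) :
    Module.Free ℤ
      ((WBasisIdx e n d lam c →₀ ℤ) ⧸ altRelations e n d lam c) ∧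
    (2 < e →
      Module.finrank ℤ
          ((WBasisIdx e n d lam c →₀ ℤ) ⧸ altRelations e n d lam c) =
        Nat.multinomial (Finset.range n) lam *
          3 ^ ((∑ t ∈ (Finset.range n).filter (fun t => c t = 1), lam t) +
               (∑ t ∈ (Finset.range n).filter (fun t => c t = e - 1), lam t)) *
          4 ^ (∑ j ∈ Finset.Icc 2 (e - 2),
                ∑ t ∈ (Finset.range n).filter (fun t => c t = j), lam t)) ∧
    (e = 2 →
      Module.finrank ℤ
          ((WBasisIdx e n d lam c →₀ ℤ) ⧸ altRelations e n d lam c) =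
        Nat.multinomial (Finset.range n) lam *
          2 ^ (∑ t ∈ (Finset.range n).filter (fun t => c t = 1), lam t)) := by
  have hrank : Module.finrank ℤ ((WBasisIdx e n d lam c →₀ ℤ) ⧸ altRelations e n d lam c) =
      Nat.multinomial (range n) lam *
        ∏ j ∈ Icc 1 (e - 1),
          #(allowedT e j) ^ ∑ t ∈ (range n).filter (fun t => c t = j), lam t := by
    rw [finrank_quotient_altRelations, card_tensorLabels hlam, index_youngSubgroup hlam, mul_comm,
      prod_pow_eq_prod_fiberwise (fun j => #(allowedT e j)) fun t ht => mem_Icc.2 (hc t ht)]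
  refine ⟨free_quotient_altRelations, fun he => ?_, fun he => ?_⟩
  · rw [hrank, prod_Icc_card_allowedT_pow he, mul_assoc]
  · subst he
    rw [hrank, Icc_self, prod_singleton, card_allowedT_two_one]

/-- The coloured permutation module
`M_{λ,c} = alt_{λ,c} ⊗_{W_{λ,c}} e_{λ,c} W_d` over the wreath product
`W_d = Z^{⊗d} ⋊ ℤ𝔖_d` of the type `A_{e-1}` zigzag algebra is a free
`ℤ`-module of rank `|𝔖_d : 𝔖_λ| · 3^{d_1 + d_{e-1}} · 4^{∑_{j=2}^{e-2} d_j}`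
when `e > 2`, and of rank `|𝔖_d : 𝔖_λ| · 2^{d_1}` when `e = 2`,
where `d_j = ∑_{c_r = j} λ_r`. -/
theorem colored_permutation_module_rank
    (e n d : ℕ) (he : 2 ≤ e) (hn : 1 ≤ n)
    (lam : ℕ → ℕ) (hlam : ∑ t ∈ Finset.range n, lam t = d)
    (c : ℕ → ℕ) (hc : ∀ t, t < n → 1 ≤ c t ∧ c t ≤ e - 1) :
    Module.Free ℤ
      ((WBasisIdx e n d lam c →₀ ℤ) ⧸ altRelations e n d lam c) ∧
    (2 < e →
      Module.finrank ℤ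
          ((WBasisIdx e n d lam c →₀ ℤ) ⧸ altRelations e n d lam c) =
        Nat.multinomial (Finset.range n) lam *
          3 ^ ((∑ t ∈ (Finset.range n).filter (fun t => c t = 1), lam t) +
               (∑ t ∈ (Finset.range n).filter (fun t => c t = e - 1), lam t)) *
          4 ^ (∑ j ∈ Finset.Icc 2 (e - 2),
                ∑ t ∈ (Finset.range n).filter (fun t => c t = j), lam t)) ∧
    (e = 2 →
      Module.finrank ℤ
          ((WBasisIdx e n d lam c →₀ ℤ) ⧸ altRelations e n d lam c) =
        Nat.multinomial (Finset.range n) lam *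
          2 ^ (∑ t ∈ (Finset.range n).filter (fun t => c t = 1), lam t)) :=
  colored_permutation_module_rank_general e n d lam hlam c hc
end
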